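/- arXiv:2106.11772 — 6 statements merged into one kernel-verified Lean document; each statement's English description precedes it below -/
import Mathlib

section
/- Let f : ℝ → ℝ be continuous on [a, x]. Then the iterated integral ∫_a^x ∫_a^{x_1} ⋯ ∫_a^{x_{m-1}} f(x_m) dx_m ⋯ dx_1 equals (1/(m-1)!) ∫_a^x (x - t)^{m-1} f(t) dt. -/
open intervalIntegral

/-- `iterInt a f n` is the `n`-fold iterated integral of `f` with base point `a`. -/
noncomputable def iterInt (a : ℝ) (f : ℝ → ℝ) : ℕ → ℝ → ℝ
  | 0 => f
  | n + 1 => fun x => ∫ t in a..x, iterInt a f n t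

/-! Induction on `m`: the `(n+2)`-fold integral of `f` is the `(n+1)`-fold integral of its
primitive `F`, and one integration by parts turns `∫ (x - t)^(n+1) f t` into
`(n+1) ∫ (x - t)^n F t`. -/

open Set

theorem iterInt_succ' (a : ℝ) (f : ℝ → ℝ) (n : ℕ) :
    iterInt a f (n + 1) = iterInt a (fun x => ∫ t in a..x, f t) n := by
  induction n with
  | zero => rfl
  | succ n ih => exact funext fun x => by rw [iterInt, ih]; rfl

section Primitive

variable {g : ℝ → ℝ} {a b : ℝ}

theorem hasDerivAt_primitive_of_mem_Ioo (hg : ContinuousOn g (uIcc a b)) {t : ℝ}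
    (ht : t ∈ Ioo (min a b) (max a b)) : HasDerivAt (fun u => ∫ s in a..u, g s) (g t) t := by
  have hsub : uIcc a t ⊆ uIcc a b := uIcc_subset_uIcc_left (Ioo_subset_Icc_self ht)
  exact integral_hasDerivAt_right (hg.mono hsub).intervalIntegrable
    ((hg.mono Ioo_subset_Icc_self).stronglyMeasurableAtFilter isOpen_Ioo t ht)
    (hg.continuousAt (Icc_mem_nhds ht.1 ht.2))

theorem continuousOn_primitive_of_continuousOn (hg : ContinuousOn g (uIcc a b)) :
    ContinuousOn (fun u => ∫ s in a..u, g s) (uIcc a b) :=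
  continuousOn_primitive_interval (hg.integrableOn_compact isCompact_uIcc)

/-- Integration by parts; both boundary terms vanish, the primitive at `a` and the kernel at `b`. -/
theorem integral_pow_succ_mul_eq (hg : ContinuousOn g (uIcc a b)) (n : ℕ) :
    ∫ t in a..b, (b - t) ^ (n + 1) * g t =
      (n + 1) * ∫ t in a..b, (b - t) ^ n * ∫ s in a..t, g s := by
  have hkernel (t : ℝ) : HasDerivAt (fun t => (b - t) ^ (n + 1)) (-((n + 1) * (b - t) ^ n)) t :=
    (((hasDerivAt_id' t).const_sub b).fun_pow (n + 1)).congr_deriv (by push_cast; ring)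
  rw [integral_mul_deriv_eq_deriv_mul_of_hasDerivAt (by fun_prop)
    (continuousOn_primitive_of_continuousOn hg) (fun t _ => hkernel t)
    (fun t ht => hasDerivAt_primitive_of_mem_Ioo hg ht)
    (Continuous.intervalIntegrable (by fun_prop) _ _)
    hg.intervalIntegrable]
  simp only [sub_self, integral_same, zero_pow n.succ_ne_zero, zero_mul, mul_zero, zero_sub,
    neg_mul, integral_neg, neg_neg, mul_assoc, integral_const_mul]

end Primitive

theorem iterInt_succ_eq_integral {a b : ℝ} {g : ℝ → ℝ} (hg : ContinuousOn g (uIcc a b)) (n : ℕ) :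
    iterInt a g (n + 1) b = (1 / n.factorial : ℝ) * ∫ t in a..b, (b - t) ^ n * g t := by
  induction n generalizing g with
  | zero => simp [iterInt]
  | succ n ih =>
    rw [iterInt_succ', ih (continuousOn_primitive_of_continuousOn hg),
      integral_pow_succ_mul_eq hg, Nat.factorial_succ]
    push_cast
    field_simp

theorem cauchy_repeated_integration
    (m : ℕ) (hm : 1 ≤ m) (a x : ℝ) (hax : a < x) (f : ℝ → ℝ)
    (hf : ContinuousOn f (Set.Icc a x)) :
    iterInt a f m x =
      (1 / (m - 1).factorial : ℝ) * ∫ t in a..x, (x - t) ^ (m - 1) * f t := by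
  obtain ⟨n, rfl⟩ : ∃ n, m = n + 1 := ⟨m - 1, by omega⟩
  rw [← uIcc_of_le hax.le] at hf
  simpa using iterInt_succ_eq_integral hf n
end

section
/- Let f be continuous on [a,x], let α, β > 0. Then applying the Riemann–Liouville fractional integral of order β to the Riemann–Liouville fractional integral of order α of f yields the Riemann–Liouville fractional integral of order α + β: (1/Γ(β)) ∫_a^x (x-s)^{β-1} [ (1/Γ(α)) ∫_a^s (s-t)^{α-1} f(t) dt ] ds = (1/Γ(α+β)) ∫_a^x (x-t)^{α+β-1} f(t) dt. -/
/-!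
Both sides are integrals over the triangle `a < t ≤ s ≤ x`. Exchanging the order of integration
(Dirichlet's formula) turns the left side into `∫_a^x (∫_t^x (x-s)^(β-1) (s-t)^(α-1) ds) f(t) dt`,
and the substitution `s = t + (x - t) u` evaluates the inner integral as the Beta integral
`B(α, β) (x-t)^(α+β-1) = Γ(α) Γ(β) / Γ(α+β) · (x-t)^(α+β-1)`. Fubini applies because the kernel
is integrable on the triangle: its integral in `t` is `(x-s)^(β-1) (s-a)^α / α`.
-/

open intervalIntegral Real MeasureTheory Set Function

lemma integral_rpow_mul_one_sub_rpow {α β : ℝ} (hα : 0 < α) (hβ : 0 < β) :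
    ∫ u in (0 : ℝ)..1, u ^ (α - 1) * (1 - u) ^ (β - 1) = Gamma α * Gamma β / Gamma (α + β) := by
  have h := Complex.betaIntegral_eq_Gamma_mul_div α β (by simpa) (by simpa)
  rw [← Complex.ofReal_add, Complex.Gamma_ofReal, Complex.Gamma_ofReal, Complex.Gamma_ofReal,
    Complex.betaIntegral] at h
  apply Complex.ofReal_injective
  rw [Complex.ofReal_div, Complex.ofReal_mul, ← h, ← intervalIntegral.integral_ofReal]
  refine integral_congr fun u hu => ?_
  rw [uIcc_of_le zero_le_one] at hu
  push_cast
  rw [Complex.ofReal_cpow hu.1, Complex.ofReal_cpow (sub_nonneg.2 hu.2)]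
  push_cast
  rfl

lemma integral_sub_rpow {α : ℝ} (hα : 0 < α) (a s : ℝ) :
    ∫ t in a..s, (s - t) ^ (α - 1) = (s - a) ^ α / α := by
  rw [integral_comp_sub_left (· ^ (α - 1)), sub_self, integral_rpow (.inl (by linarith)),
    sub_add_cancel, zero_rpow hα.ne', sub_zero]

lemma intervalIntegrable_sub_rpow {γ : ℝ} (hγ : -1 < γ) (c a b : ℝ) :
    IntervalIntegrable (fun t => (c - t) ^ γ) volume a b := by
  simpa using (intervalIntegrable_rpow' hγ (a := c - a) (b := c - b)).comp_sub_left c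

lemma integral_sub_rpow_mul_sub_rpow {α β t x : ℝ} (hα : 0 < α) (hβ : 0 < β) (htx : t < x) :
    ∫ s in t..x, (x - s) ^ (β - 1) * (s - t) ^ (α - 1) =
      Gamma α * Gamma β / Gamma (α + β) * (x - t) ^ (α + β - 1) := by
  have hxt : 0 < x - t := sub_pos.2 htx
  have hsubst := integral_comp_add_mul (fun s => (x - s) ^ (β - 1) * (s - t) ^ (α - 1))
    hxt.ne' t (a := 0) (b := 1)
  simp only [mul_zero, add_zero, mul_one, add_sub_cancel, smul_eq_mul] at hsubst
  have hscale : ∀ u ∈ uIcc (0 : ℝ) 1,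
      (x - (t + (x - t) * u)) ^ (β - 1) * (t + (x - t) * u - t) ^ (α - 1) =
        (x - t) ^ (β - 1) * (x - t) ^ (α - 1) * (u ^ (α - 1) * (1 - u) ^ (β - 1)) := by
    intro u hu
    rw [uIcc_of_le zero_le_one] at hu
    rw [show x - (t + (x - t) * u) = (x - t) * (1 - u) by ring, add_sub_cancel_left,
      mul_rpow hxt.le (sub_nonneg.2 hu.2), mul_rpow hxt.le hu.1]
    ring
  have hpow : (x - t) * ((x - t) ^ (β - 1) * (x - t) ^ (α - 1)) = (x - t) ^ (α + β - 1) := by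
    rw [show α + β - 1 = 1 + ((β - 1) + (α - 1)) by ring, rpow_add hxt, rpow_add hxt, rpow_one]
  rw [integral_congr hscale, intervalIntegral.integral_const_mul,
    integral_rpow_mul_one_sub_rpow hα hβ, eq_inv_mul_iff_mul_eq₀ hxt.ne'] at hsubst
  rw [← hsubst, ← mul_assoc, hpow, mul_comm]

def triangle (a b : ℝ) : Set (ℝ × ℝ) := {p | a < p.2 ∧ p.2 ≤ p.1 ∧ p.1 ≤ b}

section Triangle

variable {a b : ℝ}

lemma measurableSet_triangle : MeasurableSet (triangle a b) :=
  (measurableSet_lt measurable_const measurable_snd).inter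
    ((measurableSet_le measurable_snd measurable_fst).inter
      (measurableSet_le measurable_fst measurable_const))

lemma triangle_subset_Icc_prod_Icc : triangle a b ⊆ Icc a b ×ˢ Icc a b :=
  fun _ ⟨h₁, h₂, h₃⟩ => ⟨⟨by linarith, h₃⟩, ⟨h₁.le, by linarith⟩⟩

lemma indicator_triangle_eq_indicator_Ioc_Ioc {M : Type*} [Zero M] (G : ℝ × ℝ → M) (s t : ℝ) :
    (triangle a b).indicator G (s, t) =
      (Ioc a b).indicator (fun s => (Ioc a s).indicator (fun t => G (s, t)) t) s := by
  simp only [indicator_apply, triangle, mem_ofPred_eq, mem_Ioc]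
  split_ifs <;> first | rfl | (exfalso; grind)

lemma indicator_triangle_eq_indicator_Ioc_Icc {M : Type*} [Zero M] (G : ℝ × ℝ → M) (s t : ℝ) :
    (triangle a b).indicator G (s, t) =
      (Ioc a b).indicator (fun t => (Icc t b).indicator (fun s => G (s, t)) s) t := by
  simp only [indicator_apply, triangle, mem_ofPred_eq, mem_Ioc, mem_Icc]
  split_ifs <;> first | rfl | (exfalso; grind)

variable {E : Type*} [NormedAddCommGroup E]

theorem integrableOn_triangle_of_slices {F : ℝ → ℝ → E}
    (hF : AEStronglyMeasurable (uncurry F) (volume.restrict (triangle a b)))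
    (h_slice : ∀ s ∈ Ioc a b, IntegrableOn (F s) (Ioc a s))
    (h_norm : IntegrableOn (fun s => ∫ t in Ioc a s, ‖F s t‖) (Ioc a b)) :
    IntegrableOn (uncurry F) (triangle a b) := by
  rw [← integrable_indicator_iff measurableSet_triangle, Measure.volume_eq_prod,
    integrable_prod_iff ((aestronglyMeasurable_indicator_iff measurableSet_triangle).2 hF)]
  constructor
  · refine .of_forall fun s => ?_
    simp_rw [indicator_triangle_eq_indicator_Ioc_Ioc]
    by_cases hs : s ∈ Ioc a b
    · simp only [indicator_of_mem hs]
      exact (integrable_indicator_iff measurableSet_Ioc).2 (h_slice s hs)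
    · simp only [indicator_of_notMem hs]
      exact integrable_zero _ _ _
  · simp_rw [indicator_triangle_eq_indicator_Ioc_Ioc, norm_indicator_eq_indicator_norm,
      integral_indicator₂, MeasureTheory.integral_indicator measurableSet_Ioc]
    exact (integrable_indicator_iff measurableSet_Ioc).2 h_norm

variable [NormedSpace ℝ E]

lemma integral_integral_indicator_triangle (hab : a ≤ b) (F : ℝ → ℝ → E) :
    ∫ s, ∫ t, (triangle a b).indicator (uncurry F) (s, t) = ∫ s in a..b, ∫ t in a..s, F s t := by
  simp_rw [indicator_triangle_eq_indicator_Ioc_Ioc, integral_indicator₂,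
    MeasureTheory.integral_indicator measurableSet_Ioc, intervalIntegral.integral_of_le hab]
  refine setIntegral_congr_fun measurableSet_Ioc fun s hs => ?_
  rw [intervalIntegral.integral_of_le hs.1.le]
  rfl

lemma integral_integral_indicator_triangle_swap (hab : a ≤ b) (F : ℝ → ℝ → E) :
    ∫ t, ∫ s, (triangle a b).indicator (uncurry F) (s, t) = ∫ t in a..b, ∫ s in t..b, F s t := by
  simp_rw [indicator_triangle_eq_indicator_Ioc_Icc, integral_indicator₂,
    MeasureTheory.integral_indicator measurableSet_Ioc,
    MeasureTheory.integral_indicator measurableSet_Icc, intervalIntegral.integral_of_le hab]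
  refine setIntegral_congr_fun measurableSet_Ioc fun t ht => ?_
  rw [intervalIntegral.integral_of_le ht.2, integral_Icc_eq_integral_Ioc]
  rfl

theorem intervalIntegral_intervalIntegral_swap_triangle (hab : a ≤ b)
    {F : ℝ → ℝ → E} (hF : IntegrableOn (uncurry F) (triangle a b)) :
    ∫ s in a..b, ∫ t in a..s, F s t = ∫ t in a..b, ∫ s in t..b, F s t := by
  rw [← integral_integral_indicator_triangle hab, ← integral_integral_indicator_triangle_swap hab]
  refine integral_integral_swap ?_
  rw [← Measure.volume_eq_prod]
  exact (integrable_indicator_iff measurableSet_triangle).2 hF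

end Triangle

lemma integrableOn_triangle_sub_rpow_mul_sub_rpow {α β : ℝ} (hα : 0 < α) (hβ : 0 < β) (a x : ℝ) :
    IntegrableOn (uncurry fun s t => (x - s) ^ (β - 1) * (s - t) ^ (α - 1)) (triangle a x) := by
  have hα' : -1 < α - 1 := by linarith
  have hβ' : -1 < β - 1 := by linarith
  refine integrableOn_triangle_of_slices (Measurable.aestronglyMeasurable (by fun_prop))
    (fun s _ => ((intervalIntegrable_sub_rpow hα' s a s).const_mul _).1) ?_
  have hcont : ContinuousOn (fun s => (s - a) ^ α / α) (uIcc a x) :=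
    (((continuous_id.sub continuous_const).rpow_const fun _ => .inr hα.le).div_const _).continuousOn
  refine ((intervalIntegrable_sub_rpow hβ' x a x).mul_continuousOn hcont).1.congr_fun
    (fun s hs => ?_) measurableSet_Ioc
  dsimp only
  rw [← integral_sub_rpow hα, ← intervalIntegral.integral_const_mul,
    intervalIntegral.integral_of_le hs.1.le]
  refine setIntegral_congr_fun measurableSet_Ioc fun t ht => ?_
  rw [Real.norm_of_nonneg (mul_nonneg (rpow_nonneg (sub_nonneg.2 hs.2) _)
    (rpow_nonneg (sub_nonneg.2 ht.2) _))]

noncomputable def riemannLiouvilleIntegral (a α : ℝ) (f : ℝ → ℝ) (x : ℝ) : ℝ :=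
  1 / Gamma α * ∫ t in a..x, (x - t) ^ (α - 1) * f t

theorem riemannLiouvilleIntegral_riemannLiouvilleIntegral {a x α β : ℝ} {f : ℝ → ℝ}
    (hax : a ≤ x) (hα : 0 < α) (hβ : 0 < β) (hf : ContinuousOn f (Icc a x)) :
    riemannLiouvilleIntegral a β (riemannLiouvilleIntegral a α f) x =
      riemannLiouvilleIntegral a (α + β) f x := by
  have hF : IntegrableOn (uncurry fun s t => (x - s) ^ (β - 1) * (s - t) ^ (α - 1) * f t)
      (triangle a x) :=
    (integrableOn_triangle_sub_rpow_mul_sub_rpow hα hβ a x).mul_continuousOn_of_subset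
      (hf.comp continuousOn_snd fun _ hp => hp.2) measurableSet_triangle
      (isCompact_Icc.prod isCompact_Icc) triangle_subset_Icc_prod_Icc
  have hkernel : ∀ᵐ t, t ∈ uIoc a x →
      ∫ s in t..x, (x - s) ^ (β - 1) * (s - t) ^ (α - 1) * f t =
        Gamma α * Gamma β / Gamma (α + β) * ((x - t) ^ (α + β - 1) * f t) := by
    -- at `t = x` the identity fails when `α + β = 1`, since `0 ^ 0 = 1`
    filter_upwards [Measure.ae_ne volume x] with t htx ht
    rw [uIoc_of_le hax] at ht
    rw [intervalIntegral.integral_mul_const,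
      integral_sub_rpow_mul_sub_rpow hα hβ (lt_of_le_of_ne ht.2 htx), mul_assoc]
  calc riemannLiouvilleIntegral a β (riemannLiouvilleIntegral a α f) x
      = 1 / Gamma β * (1 / Gamma α *
          ∫ s in a..x, ∫ t in a..s, (x - s) ^ (β - 1) * (s - t) ^ (α - 1) * f t) := by
        simp_rw [riemannLiouvilleIntegral, ← intervalIntegral.integral_const_mul]
        exact intervalIntegral.integral_congr fun s _ =>
          intervalIntegral.integral_congr fun t _ => by ring
    _ = 1 / Gamma β * (1 / Gamma α *
          ∫ t in a..x, Gamma α * Gamma β / Gamma (α + β) * ((x - t) ^ (α + β - 1) * f t)) := by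
        rw [intervalIntegral_intervalIntegral_swap_triangle hax hF,
          intervalIntegral.integral_congr_ae hkernel]
    _ = riemannLiouvilleIntegral a (α + β) f x := by
        rw [intervalIntegral.integral_const_mul, riemannLiouvilleIntegral]
        field_simp

theorem riemann_liouville_semigroup
    (a x α β : ℝ) (hax : a < x) (hα : 0 < α) (hβ : 0 < β)
    (f : ℝ → ℝ) (hf : ContinuousOn f (Set.Icc a x)) :
    (1 / Real.Gamma β) * (∫ s in a..x, (x - s) ^ (β - 1) *
        ((1 / Real.Gamma α) * ∫ t in a..s, (s - t) ^ (α - 1) * f t)) =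
      (1 / Real.Gamma (α + β)) * ∫ t in a..x, (x - t) ^ (α + β - 1) * f t :=
  riemannLiouvilleIntegral_riemannLiouvilleIntegral hax.le hα hβ hf
end

section
/- For α > 0 and β > -1 and x > a, the Riemann–Liouville fractional integral of order α of the power function t ↦ (t - a)^β with base point a equals (Γ(β+1)/Γ(β+α+1)) · (x - a)^{β+α}. -/
open intervalIntegral Real

/-! The substitution `t = a + u` turns the integral into the scaled Beta integral
`∫₀ᶜ u^(p-1) (c-u)^(q-1) du = B(p, q) c^(p+q-1)` with `p = β + 1`, `q = α`, `c = x - a`;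
Mathlib evaluates it over `ℂ` (`Complex.betaIntegral_scaled`). -/

theorem integral_rpow_mul_sub_rpow {p q c : ℝ} (hp : 0 < p) (hq : 0 < q) (hc : 0 < c) :
    ∫ u in (0 : ℝ)..c, u ^ (p - 1) * (c - u) ^ (q - 1) =
      Gamma p * Gamma q / Gamma (p + q) * c ^ (p + q - 1) := by
  have hcast : ((∫ u in (0 : ℝ)..c, u ^ (p - 1) * (c - u) ^ (q - 1) : ℝ) : ℂ) =
      ∫ u in (0 : ℝ)..c, (u : ℂ) ^ ((p : ℂ) - 1) * ((c : ℂ) - u) ^ ((q : ℂ) - 1) := by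
    rw [← integral_ofReal]
    refine integral_congr fun u hu => ?_
    rw [Set.uIcc_of_le hc.le] at hu
    push_cast [Complex.ofReal_cpow hu.1, Complex.ofReal_cpow (sub_nonneg.2 hu.2)]
    rfl
  apply Complex.ofReal_injective
  rw [hcast, Complex.betaIntegral_scaled _ _ hc,
    Complex.betaIntegral_eq_Gamma_mul_div _ _ (by simpa) (by simpa)]
  push_cast [Complex.ofReal_cpow hc.le, ← Complex.Gamma_ofReal]
  ring

theorem riemann_liouville_power_function
    (a x α β : ℝ) (hα : 0 < α) (hβ : -1 < β) (hax : a < x) :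
    (1 / Real.Gamma α) * (∫ t in a..x, (x - t) ^ (α - 1) * (t - a) ^ β) =
      (Real.Gamma (β + 1) / Real.Gamma (β + α + 1)) * (x - a) ^ (β + α) := by
  have htranslate : ∫ t in a..x, (x - t) ^ (α - 1) * (t - a) ^ β =
      ∫ u in (0 : ℝ)..x - a, u ^ (β + 1 - 1) * (x - a - u) ^ (α - 1) := by
    rw [← sub_self a, ← integral_comp_sub_right]
    simp only [sub_sub_sub_cancel_right, add_sub_cancel_right, mul_comm]
  rw [htranslate, integral_rpow_mul_sub_rpow (by linarith) hα (sub_pos.2 hax),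
    add_sub_right_comm, add_sub_cancel_right, add_right_comm]
  field_simp [(Gamma_pos_of_pos hα).ne']
end

section
/- Let 0 < α < 1 and x > 0. Then ∫_0^x f(t) dt = (sin(πα)/π) ∫_0^x (x-t)^{α-1} ( ∫_0^t (t-τ)^{-α} f(τ) dτ ) dt for every continuous function f on [0, x]. -/
/-! Both sides are iterated integrals of `(x - t) ^ (α - 1) * (t - τ) ^ (-α) * f τ` over the
triangle `0 < τ < t < x`. Exchanging the order of integration, the inner integral
`∫ t in τ..x, (x - t) ^ (α - 1) * (t - τ) ^ (-α)` becomes, after the substitution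
`t = τ + (x - τ) s`, the Beta integral `B(1 - α, α) = Γ(1 - α) Γ(α) = π / sin (π α)`, independent
of `τ`. The kernel is integrable on the triangle because the shear `(t, τ) ↦ (t, t - τ)` maps it
into a rectangle on which the kernel is a product of integrable powers of one variable. -/

open intervalIntegral Real MeasureTheory Set Function

theorem integral_rpow_mul_one_sub_rpow_eq_Gamma_mul_div {p q : ℝ} (hp : 0 < p) (hq : 0 < q) :
    ∫ s in (0:ℝ)..1, s ^ (p - 1) * (1 - s) ^ (q - 1) = Gamma p * Gamma q / Gamma (p + q) := by
  have h := Complex.betaIntegral_eq_Gamma_mul_div p q (by simpa) (by simpa)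
  rw [← Complex.ofReal_add, Complex.Gamma_ofReal, Complex.Gamma_ofReal, Complex.Gamma_ofReal,
    Complex.betaIntegral] at h
  apply Complex.ofReal_injective
  rw [← integral_ofReal]
  push_cast
  rw [← h]
  refine integral_congr fun s hs => ?_
  rw [uIcc_of_le zero_le_one] at hs
  rw [Complex.ofReal_cpow hs.1, Complex.ofReal_cpow (by linarith [hs.2]), Complex.ofReal_sub]
  push_cast
  ring_nf

theorem integral_sub_rpow_mul_sub_rpow_eq_pi_div_sin {α τ x : ℝ} (hα0 : 0 < α) (hα1 : α < 1)
    (hτx : τ < x) :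
    ∫ t in τ..x, (x - t) ^ (α - 1) * (t - τ) ^ (-α) = π / sin (π * α) := by
  have hc : 0 < x - τ := sub_pos.2 hτx
  have hbeta :=
    integral_rpow_mul_one_sub_rpow_eq_Gamma_mul_div (p := 1 - α) (q := α) (by linarith) hα0
  rw [sub_add_cancel, Gamma_one, div_one, mul_comm, Gamma_mul_Gamma_one_sub,
    show 1 - α - 1 = -α by ring] at hbeta
  have hsub := mul_integral_comp_mul_add (a := 0) (b := 1)
    (f := fun t => (x - t) ^ (α - 1) * (t - τ) ^ (-α)) (x - τ) τ
  rw [mul_zero, zero_add, mul_one, sub_add_cancel] at hsub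
  rw [← hsub, ← hbeta, ← intervalIntegral.integral_const_mul]
  refine integral_congr fun s hs => ?_
  rw [uIcc_of_le zero_le_one] at hs
  have hscale : (x - τ) * ((x - τ) ^ (α - 1) * (x - τ) ^ (-α)) = 1 := by
    rw [← rpow_add hc, show α - 1 + -α = -1 by ring, rpow_neg_one, mul_inv_cancel₀ hc.ne']
  rw [show x - ((x - τ) * s + τ) = (x - τ) * (1 - s) by ring, add_sub_cancel_right,
    mul_rpow hc.le (by linarith [hs.2]), mul_rpow hc.le hs.1]
  linear_combination (s ^ (-α) * (1 - s) ^ (α - 1)) * hscale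

def openTriangle (a b : ℝ) : Set (ℝ × ℝ) := {p | a < p.2 ∧ p.2 < p.1 ∧ p.1 < b}

theorem measurableSet_openTriangle (a b : ℝ) : MeasurableSet (openTriangle a b) :=
  (measurableSet_lt measurable_const measurable_snd).inter
    ((measurableSet_lt measurable_snd measurable_fst).inter
      (measurableSet_lt measurable_fst measurable_const))

theorem mk_mem_openTriangle_iff {a b t τ : ℝ} :
    (t, τ) ∈ openTriangle a b ↔ t ∈ Ioo a b ∧ τ ∈ Ioo a t :=
  ⟨fun ⟨h1, h2, h3⟩ => ⟨⟨h1.trans h2, h3⟩, h1, h2⟩, fun ⟨⟨_, h3⟩, h1, h2⟩ => ⟨h1, h2, h3⟩⟩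

theorem mk_mem_openTriangle_iff' {a b t τ : ℝ} :
    (t, τ) ∈ openTriangle a b ↔ τ ∈ Ioo a b ∧ t ∈ Ioo τ b :=
  ⟨fun ⟨h1, h2, h3⟩ => ⟨⟨h1, h2.trans h3⟩, h2, h3⟩, fun ⟨⟨h1, _⟩, h2, h3⟩ => ⟨h1, h2, h3⟩⟩

section
variable {E : Type*} [NormedAddCommGroup E] [NormedSpace ℝ E]

theorem integral_indicator_openTriangle_left {a b : ℝ} (F : ℝ → ℝ → E) (t : ℝ) :
    ∫ τ, (openTriangle a b).indicator (uncurry F) (t, τ) =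
      (Ioo a b).indicator (fun t => ∫ τ in a..t, F t τ) t := by
  by_cases ht : t ∈ Ioo a b
  · have hslice : (fun τ => (openTriangle a b).indicator (uncurry F) (t, τ)) =
        (Ioo a t).indicator (F t) := by
      ext τ; by_cases hτ : τ ∈ Ioo a t <;> simp [mk_mem_openTriangle_iff, ht, hτ]
    rw [hslice, MeasureTheory.integral_indicator measurableSet_Ioo, indicator_of_mem ht,
      integral_of_le ht.1.le, integral_Ioc_eq_integral_Ioo]
  · simp [indicator, mk_mem_openTriangle_iff, ht]

theorem integral_indicator_openTriangle_right {a b : ℝ} (F : ℝ → ℝ → E) (τ : ℝ) :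
    ∫ t, (openTriangle a b).indicator (uncurry F) (t, τ) =
      (Ioo a b).indicator (fun τ => ∫ t in τ..b, F t τ) τ := by
  by_cases hτ : τ ∈ Ioo a b
  · have hslice : (fun t => (openTriangle a b).indicator (uncurry F) (t, τ)) =
        (Ioo τ b).indicator (F · τ) := by
      ext t; by_cases ht : t ∈ Ioo τ b <;> simp [mk_mem_openTriangle_iff', ht, hτ]
    rw [hslice, MeasureTheory.integral_indicator measurableSet_Ioo, indicator_of_mem hτ,
      integral_of_le hτ.2.le, integral_Ioc_eq_integral_Ioo]
  · simp [indicator, mk_mem_openTriangle_iff', hτ]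

theorem integral_integral_swap_openTriangle {a b : ℝ} (hab : a ≤ b) {F : ℝ → ℝ → E}
    (hF : IntegrableOn (uncurry F) (openTriangle a b)) :
    ∫ t in a..b, ∫ τ in a..t, F t τ = ∫ τ in a..b, ∫ t in τ..b, F t τ := by
  have hG : Integrable (uncurry fun t τ => (openTriangle a b).indicator (uncurry F) (t, τ))
      (volume.prod volume) := by
    rw [← Measure.volume_eq_prod]
    exact (integrable_indicator_iff (measurableSet_openTriangle a b)).2 hF
  have hswap := integral_integral_swap hG
  simp only [integral_indicator_openTriangle_left, integral_indicator_openTriangle_right,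
    MeasureTheory.integral_indicator measurableSet_Ioo] at hswap
  rwa [integral_of_le hab, integral_of_le hab, integral_Ioc_eq_integral_Ioo,
    integral_Ioc_eq_integral_Ioo]

end

theorem integrableOn_Ioo_rpow {r : ℝ} (hr : -1 < r) (a b : ℝ) :
    IntegrableOn (fun s => s ^ r) (Ioo a b) :=
  ((intervalIntegrable_rpow' hr).def'.mono_set Ioc_subset_uIoc).mono_set Ioo_subset_Ioc_self

theorem integrableOn_Ioo_sub_rpow {r : ℝ} (hr : -1 < r) (a b : ℝ) :
    IntegrableOn (fun t => (b - t) ^ r) (Ioo a b) := by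
  have := ((intervalIntegrable_rpow' hr).comp_sub_left b (a := 0) (b := b - a))
  rw [sub_zero, sub_sub_cancel] at this
  exact (this.symm.def'.mono_set Ioc_subset_uIoc).mono_set Ioo_subset_Ioc_self

theorem measurePreserving_fst_sub : MeasurePreserving (fun p : ℝ × ℝ => (p.1, p.1 - p.2)) := by
  have h := ((MeasurePreserving.id volume).prod (Measure.measurePreserving_neg volume)).comp
    (measurePreserving_prod_sub (volume : Measure ℝ) volume)
  rw [← Measure.volume_eq_prod] at h
  convert h using 1
  ext p <;> simp

theorem integrableOn_sub_rpow_mul_sub_rpow_openTriangle {β γ : ℝ} (hβ : -1 < β) (hγ : -1 < γ)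
    (a b : ℝ) :
    IntegrableOn (fun p : ℝ × ℝ => (b - p.1) ^ β * (p.1 - p.2) ^ γ) (openTriangle a b) := by
  have hR : IntegrableOn (fun q : ℝ × ℝ => (b - q.1) ^ β * q.2 ^ γ) (Ioo a b ×ˢ Ioo 0 (b - a)) := by
    rw [IntegrableOn, Measure.volume_eq_prod, ← Measure.prod_restrict]
    exact (integrableOn_Ioo_sub_rpow hβ a b).mul_prod (integrableOn_Ioo_rpow hγ 0 (b - a))
  have hshear := measurePreserving_fst_sub.integrable_comp_of_integrable
    ((integrable_indicator_iff (measurableSet_Ioo.prod measurableSet_Ioo)).2 hR)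
  refine hshear.integrableOn.congr_fun (fun p hp => ?_) (measurableSet_openTriangle a b)
  obtain ⟨h1, h2, h3⟩ := hp
  rw [comp_apply, indicator_of_mem]
  exact ⟨⟨h1.trans h2, h3⟩, by linarith, by linarith⟩

theorem integrableOn_sub_rpow_mul_sub_rpow_mul_openTriangle {β γ a b : ℝ} (hβ : -1 < β)
    (hγ : -1 < γ) {f : ℝ → ℝ} (hf : ContinuousOn f (Icc a b)) :
    IntegrableOn (fun p : ℝ × ℝ => (b - p.1) ^ β * (p.1 - p.2) ^ γ * f p.2)
      (openTriangle a b) := by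
  obtain ⟨M, hM⟩ := isCompact_Icc.exists_bound_of_continuousOn hf
  have hT := measurableSet_openTriangle a b
  have hmaps : MapsTo Prod.snd (openTriangle a b) (Icc a b) :=
    fun p hp => ⟨hp.1.le, (hp.2.1.trans hp.2.2).le⟩
  exact (integrableOn_sub_rpow_mul_sub_rpow_openTriangle hβ hγ a b).mul_bdd
    ((hf.comp continuousOn_snd hmaps).aestronglyMeasurable hT)
    (ae_restrict_of_forall_mem hT fun p hp => hM p.2 (hmaps hp))

theorem abel_identity
    (α x : ℝ) (hα0 : 0 < α) (hα1 : α < 1) (hx : 0 < x)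
    (f : ℝ → ℝ) (hf : ContinuousOn f (Set.Icc 0 x)) :
    (∫ t in (0:ℝ)..x, f t) =
      (Real.sin (Real.pi * α) / Real.pi) *
        ∫ t in (0:ℝ)..x, (x - t) ^ (α - 1) *
          (∫ τ in (0:ℝ)..t, (t - τ) ^ (-α) * f τ) := by
  have hsin : sin (π * α) ≠ 0 :=
    (sin_pos_of_pos_of_lt_pi (by positivity) (by nlinarith [pi_pos])).ne'
  have hswap := integral_integral_swap_openTriangle hx.le
    (F := fun t τ => (x - t) ^ (α - 1) * (t - τ) ^ (-α) * f τ)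
    (integrableOn_sub_rpow_mul_sub_rpow_mul_openTriangle (by linarith) (by linarith) hf)
  have hinner : ∫ τ in (0:ℝ)..x, ∫ t in τ..x, (x - t) ^ (α - 1) * (t - τ) ^ (-α) * f τ =
      ∫ τ in (0:ℝ)..x, π / sin (π * α) * f τ := by
    rw [integral_of_le hx.le, integral_of_le hx.le, integral_Ioc_eq_integral_Ioo,
      integral_Ioc_eq_integral_Ioo]
    refine setIntegral_congr_fun measurableSet_Ioo fun τ hτ => ?_
    rw [intervalIntegral.integral_mul_const,
      integral_sub_rpow_mul_sub_rpow_eq_pi_div_sin hα0 hα1 hτ.2]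
  calc ∫ t in (0:ℝ)..x, f t
      = sin (π * α) / π * ∫ τ in (0:ℝ)..x, π / sin (π * α) * f τ := by
        rw [intervalIntegral.integral_const_mul]; field_simp
    _ = _ := by
        rw [← hinner, ← hswap]
        congr 1
        refine integral_congr fun t _ => ?_
        rw [← intervalIntegral.integral_const_mul]
        simp only [mul_assoc]
end

section
/- Let σ, ψ be associated Sonine kernels (∫_0^x σ(x-t)ψ(t)dt = 1 for all x > 0). If a continuous function φ on [0,∞) satisfies ∫_0^x σ(x-τ) φ(τ) dτ = f(x) for all x > 0, where f is continuously differentiable with f(0) = 0, then ∫_0^x ψ(x-t) f(t) dt = ∫_0^x φ(t) dt for all x > 0, so that φ is determined by φ(x) = d/dx ∫_0^x ψ(x-t) f(t) dt. -/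
open intervalIntegral MeasureTheory Set

lemma sonine_kernel_integrableOn
    (σ ψ : ℝ → ℝ)
    (hσ : LocallyIntegrableOn σ (Set.Ioi 0))
    (hψ : LocallyIntegrableOn ψ (Set.Ioi 0))
    (hS : ∀ x : ℝ, 0 < x → (∫ t in (0:ℝ)..x, σ (x - t) * ψ t) = 1)
    (x : ℝ) (hx : 0 < x) : IntegrableOn σ (Set.Ioc 0 x) := by
  by_contra hcon
  have hσm : AEStronglyMeasurable σ (volume.restrict (Set.Ioi 0)) := hσ.aestronglyMeasurable
  have hψm : AEStronglyMeasurable ψ (volume.restrict (Set.Ioi 0)) := hψ.aestronglyMeasurable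
  set σ' : ℝ → ℝ := hσm.mk σ with hσ'def
  set ψ' : ℝ → ℝ := hψm.mk ψ with hψ'def
  have hσ'meas : StronglyMeasurable σ' := hσm.stronglyMeasurable_mk
  have hψ'meas : StronglyMeasurable ψ' := hψm.stronglyMeasurable_mk
  have hσ'ae : σ =ᵐ[volume.restrict (Set.Ioi 0)] σ' := hσm.ae_eq_mk
  have hψ'ae : ψ =ᵐ[volume.restrict (Set.Ioi 0)] ψ' := hψm.ae_eq_mk
  -- integrability of the Sonine integrand, in the substituted form
  have hInt : ∀ y : ℝ, 0 < y → IntegrableOn (fun u => σ u * ψ (y - u)) (Set.Ioc 0 y) := by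
    intro y hy
    have h1 : IntervalIntegrable (fun t => σ (y - t) * ψ t) volume 0 y := by
      by_contra hc
      have := intervalIntegral.integral_undef hc
      rw [hS y hy] at this
      exact one_ne_zero this
    have h2 := h1.comp_sub_left y
    have heq : (fun u => σ (y - (y - u)) * ψ (y - u)) = fun u => σ u * ψ (y - u) := by
      funext u; rw [sub_sub_cancel]
    rw [heq] at h2
    simp only [sub_zero, sub_self] at h2
    exact (intervalIntegrable_iff_integrableOn_Ioc_of_le hy.le).mp h2.symm
  -- non-integrability of σ' near 0, in lintegral form
  have hσtop : ∀ δ : ℝ, 0 < δ → δ ≤ x → ∫⁻ u in Set.Ioc 0 δ, (‖σ' u‖₊ : ENNReal) = ⊤ := by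
    intro δ hδ hδx
    by_contra hne
    have hfin : IntegrableOn σ' (Set.Ioc 0 δ) :=
      ⟨hσ'meas.aestronglyMeasurable.restrict, lt_top_iff_ne_top.mpr hne⟩
    have hae : σ =ᵐ[volume.restrict (Set.Ioc 0 δ)] σ' :=
      ae_restrict_of_ae_restrict_of_subset Set.Ioc_subset_Ioi_self hσ'ae
    have hfin' : IntegrableOn σ (Set.Ioc 0 δ) := hfin.congr hae.symm
    have hcpt : IntegrableOn σ (Set.Icc δ x) :=
      hσ.integrableOn_compact_subset (fun t ht => lt_of_lt_of_le hδ ht.1) isCompact_Icc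
    refine hcon ((hfin'.union hcpt).mono_set ?_)
    intro t ht
    rcases le_or_gt t δ with h | h
    · exact Or.inl ⟨ht.1, h⟩
    · exact Or.inr ⟨h.le, ht.2⟩
  set b := x / 2 with hbdef
  have hbpos : 0 < b := by positivity
  have hbx : b ≤ x := by rw [hbdef]; linarith
  -- ψ' is nonzero on a positive measure subset of Ioc 0 b
  have hT : volume ({t | ψ' t ≠ 0} ∩ Set.Ioc 0 b) ≠ 0 := by
    intro h0
    have h1 : ∀ᵐ t ∂(volume.restrict (Set.Ioc 0 b)), ψ' t = 0 := by
      rw [ae_iff, Measure.restrict_apply' measurableSet_Ioc]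
      exact h0
    have h2 : ψ =ᵐ[volume.restrict (Set.Ioc 0 b)] ψ' :=
      ae_restrict_of_ae_restrict_of_subset Set.Ioc_subset_Ioi_self hψ'ae
    have hzero : (∫ t in (0:ℝ)..b, σ (b - t) * ψ t) = 0 := by
      rw [intervalIntegral.integral_of_le hbpos.le]
      apply integral_eq_zero_of_ae
      filter_upwards [h1, h2] with t ht1 ht2
      simp [ht2, ht1]
    rw [hS b hbpos] at hzero
    exact one_ne_zero hzero
  obtain ⟨n, hn⟩ : ∃ n : ℕ, volume ({t | 1 / (n + 1 : ℝ) ≤ |ψ' t|} ∩ Set.Ioc 0 b) ≠ 0 := by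
    by_contra hall
    push_neg at hall
    apply hT
    refine measure_mono_null ?_
      ((measure_iUnion_null_iff).mpr fun n => hall n)
    rintro t ⟨ht1, ht2⟩
    have hpos : 0 < |ψ' t| := abs_pos.mpr ht1
    obtain ⟨n, hn⟩ := exists_nat_gt (1 / |ψ' t|)
    refine Set.mem_iUnion.mpr ⟨n, ⟨?_, ht2⟩⟩
    have h1 : 1 / |ψ' t| < (n : ℝ) + 1 := hn.trans (by linarith)
    have h2 : 1 < ((n : ℝ) + 1) * |ψ' t| := by
      rw [div_lt_iff₀ hpos] at h1
      linarith [h1]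
    rw [Set.mem_setOf_eq, div_le_iff₀ (by positivity)]
    linarith
  set c : ℝ := 1 / (n + 1 : ℝ) with hcdef
  have hcpos : 0 < c := by positivity
  set E := {t | c ≤ |ψ' t|} ∩ Set.Ioc 0 b with hEdef
  have hE : MeasurableSet E := by
    refine (MeasurableSet.inter ?_ measurableSet_Ioc)
    exact hψ'meas.measurable.abs measurableSet_Ici
  have hEpos : volume E ≠ 0 := hn
  have hEfin : volume E ≠ ⊤ := by
    refine ne_top_of_le_ne_top ?_ (measure_mono Set.inter_subset_right)
    simp [Real.volume_Ioc]
  have hEsub : E ⊆ Set.Ioc 0 b := Set.inter_subset_right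
  -- the key auxiliary function
  set H : ℝ → ℝ → ENNReal := fun y u => (‖σ' u‖₊ : ENNReal) * E.indicator 1 (y - u) with hHdef
  have hHmeas : Measurable (Function.uncurry H) := by
    apply Measurable.mul
    · exact (measurable_coe_nnreal_ennreal.comp hσ'meas.measurable.nnnorm).comp measurable_snd
    · exact (measurable_one.indicator hE).comp (measurable_fst.sub measurable_snd)
  set g : ℝ → ENNReal := fun y => ∫⁻ u in Set.Ioc 0 b, H y u with hgdef
  have hgmeas : Measurable g := Measurable.lintegral_prod_right' hHmeas
  -- g is finite on E
  have hgfin : ∀ y ∈ E, g y ≠ ⊤ := by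
    rintro y ⟨hyc, hy0, hyb⟩
    have hIy : IntegrableOn (fun u => σ u * ψ (y - u)) (Set.Ioo 0 y) :=
      (hInt y hy0).mono_set Set.Ioo_subset_Ioc_self
    have hlt : (∫⁻ u in Set.Ioo 0 y, (‖σ' u * ψ' (y - u)‖₊ : ENNReal)) < ⊤ := by
      have e1 : ∀ᵐ u ∂(volume.restrict (Set.Ioo 0 y)), σ' u = σ u := by
        filter_upwards [ae_restrict_of_ae_restrict_of_subset
          (fun u (hu : u ∈ Set.Ioo 0 y) => hu.1) hσ'ae] with u h
        exact h.symm
      have e2 : ∀ᵐ u ∂volume, y - u ∈ Set.Ioi 0 → ψ (y - u) = ψ' (y - u) := by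
        have h := (ae_restrict_iff' measurableSet_Ioi).mp hψ'ae
        exact (quasiMeasurePreserving_sub_left_of_right_invariant volume y).ae h
      have e2' : ∀ᵐ u ∂(volume.restrict (Set.Ioo 0 y)), ψ' (y - u) = ψ (y - u) := by
        rw [ae_restrict_iff' measurableSet_Ioo]
        filter_upwards [e2] with u h2 hu
        exact (h2 (by simp [Set.mem_Ioi]; linarith [hu.2])).symm
      have heq : (fun u => (‖σ' u * ψ' (y - u)‖₊ : ENNReal))
          =ᵐ[volume.restrict (Set.Ioo 0 y)] fun u => (‖σ u * ψ (y - u)‖₊ : ENNReal) := by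
        filter_upwards [e1, e2'] with u h1 h2
        rw [h1, h2]
      rw [lintegral_congr_ae heq]
      exact hIy.2
    have hbd : g y ≤ (ENNReal.ofReal c)⁻¹ *
        ∫⁻ u in Set.Ioo 0 y, (‖σ' u * ψ' (y - u)‖₊ : ENNReal) := by
      have hcne : (ENNReal.ofReal c)⁻¹ ≠ ⊤ := by
        simpa using hcpos
      have step1 : g y ≤ ∫⁻ u in Set.Ioc 0 b,
          (Set.Ioo 0 y).indicator
            (fun u => (ENNReal.ofReal c)⁻¹ * (‖σ' u * ψ' (y - u)‖₊ : ENNReal)) u := by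
        simp only [hgdef, hHdef]
        apply setLIntegral_mono_ae' measurableSet_Ioc
        apply Filter.Eventually.of_forall
        intro u hu
        by_cases hmem : y - u ∈ E
        · have hu' : u ∈ Set.Ioo 0 y := ⟨hu.1, by linarith [hmem.2.1]⟩
          rw [Set.indicator_of_mem hmem, Set.indicator_of_mem hu']
          have hc1 : ENNReal.ofReal c ≤ (‖ψ' (y - u)‖₊ : ENNReal) := by
            rw [← enorm_eq_nnnorm, Real.enorm_eq_ofReal_abs]
            exact ENNReal.ofReal_le_ofReal hmem.1
          have hfac : (‖σ' u‖₊ : ENNReal) * ENNReal.ofReal c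
              ≤ (‖σ' u * ψ' (y - u)‖₊ : ENNReal) := by
            rw [nnnorm_mul, ENNReal.coe_mul]
            exact mul_le_mul_right hc1 _
          calc (‖σ' u‖₊ : ENNReal) * (1 : ℝ → ENNReal) (y - u)
              = (ENNReal.ofReal c)⁻¹ * ((‖σ' u‖₊ : ENNReal) * ENNReal.ofReal c) := by
                rw [← mul_assoc, mul_comm (ENNReal.ofReal c)⁻¹, mul_assoc,
                  ENNReal.inv_mul_cancel (by simpa using hcpos) ENNReal.ofReal_ne_top]
                simp
            _ ≤ (ENNReal.ofReal c)⁻¹ * (‖σ' u * ψ' (y - u)‖₊ : ENNReal) :=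
                mul_le_mul_right hfac _
        · rw [Set.indicator_of_notMem hmem]
          simp
      refine step1.trans ?_
      calc ∫⁻ u in Set.Ioc 0 b,
            (Set.Ioo 0 y).indicator
              (fun u => (ENNReal.ofReal c)⁻¹ * (‖σ' u * ψ' (y - u)‖₊ : ENNReal)) u
          ≤ ∫⁻ u, (Set.Ioo 0 y).indicator
              (fun u => (ENNReal.ofReal c)⁻¹ * (‖σ' u * ψ' (y - u)‖₊ : ENNReal)) u :=
            setLIntegral_le_lintegral _ _
        _ = ∫⁻ u in Set.Ioo 0 y,
              (ENNReal.ofReal c)⁻¹ * (‖σ' u * ψ' (y - u)‖₊ : ENNReal) :=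
            lintegral_indicator measurableSet_Ioo _
        _ = (ENNReal.ofReal c)⁻¹ * ∫⁻ u in Set.Ioo 0 y, (‖σ' u * ψ' (y - u)‖₊ : ENNReal) :=
            lintegral_const_mul' _ _ hcne
    refine ne_top_of_le_ne_top ?_ hbd
    exact ENNReal.mul_ne_top (by simpa using hcpos) hlt.ne
  -- select a positive measure subset of E where g is uniformly bounded
  obtain ⟨m, hm⟩ : ∃ m : ℕ, volume {y | y ∈ E ∧ g y ≤ m} ≠ 0 := by
    by_contra hall
    push_neg at hall
    apply hEpos
    refine measure_mono_null ?_ ((measure_iUnion_null_iff).mpr fun m => hall m)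
    intro y hy
    obtain ⟨m, hm⟩ := ENNReal.exists_nat_gt (hgfin y hy)
    exact Set.mem_iUnion.mpr ⟨m, hy, hm.le⟩
  set A := {y | y ∈ E ∧ g y ≤ m} with hAdef
  have hA : MeasurableSet A := by
    have : A = E ∩ g ⁻¹' (Set.Iic (m : ENNReal)) := by
      ext y; simp [hAdef, Set.mem_setOf_eq, Set.mem_preimage]
    rw [this]
    exact hE.inter (hgmeas measurableSet_Iic)
  have hAsub : A ⊆ E := fun y hy => hy.1
  have hApos : volume A ≠ 0 := hm
  have hAfin : volume A ≠ ⊤ := ne_top_of_le_ne_top hEfin (measure_mono hAsub)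
  -- inner regularity: compact K inside A, open U around K
  set ε := volume A / 8 with hεdef
  have hεne : ε ≠ 0 := by
    simp only [hεdef, ne_eq, ENNReal.div_eq_zero_iff]
    push_neg
    exact ⟨hApos, by norm_num⟩
  have hεfin : ε ≠ ⊤ := by
    simp only [hεdef]
    exact (ENNReal.div_lt_top hAfin (by norm_num)).ne
  obtain ⟨K, hKA, hKc, hKlt⟩ := hA.exists_isCompact_lt_add hAfin hεne
  have hKfin : volume K ≠ ⊤ := ne_top_of_le_ne_top hAfin (measure_mono hKA)
  obtain ⟨U, hKU, hUo, hUlt⟩ := Set.exists_isOpen_lt_add K hKfin hεne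
  obtain ⟨δ, hδpos, hδU⟩ := hKc.exists_thickening_subset_open hUo hKU
  set δ₁ := min δ b with hδ₁def
  have hδ₁pos : 0 < δ₁ := lt_min hδpos hbpos
  -- key translation estimate
  have hkey : ∀ u : ℝ, 0 < u → u < δ₁ →
      volume A / 2 ≤ volume (((fun y => y - u) ⁻¹' E) ∩ A) := by
    intro u hu0 huδ
    set Ku := (fun y : ℝ => y - u) ⁻¹' K with hKudef
    have hKum : MeasurableSet Ku := hKc.measurableSet.preimage (measurable_sub_const u)
    have hKuvol : volume Ku = volume K := by
      have : Ku = (fun y => y + (-u)) ⁻¹' K := by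
        ext y; simp [hKudef, sub_eq_add_neg]
      rw [this, measure_preimage_add_right]
    have hsubU : K ∪ Ku ⊆ U := by
      refine Set.union_subset ((Metric.self_subset_thickening hδpos K).trans hδU) ?_
      intro y hy
      apply hδU
      rw [Metric.mem_thickening_iff]
      refine ⟨y - u, hy, ?_⟩
      rw [Real.dist_eq]
      rw [sub_sub_cancel, abs_of_pos hu0]
      exact lt_of_lt_of_le huδ (min_le_left _ _)
    set I := volume (K ∩ Ku) with hIdef
    have hIfin : I ≠ ⊤ :=
      ne_top_of_le_ne_top hKfin (measure_mono Set.inter_subset_left)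
    have hie : volume (K ∪ Ku) + I = volume K + volume K := by
      rw [hIdef, measure_union_add_inter K hKum, hKuvol]
    have h1 : volume K + volume K ≤ volume U + I := by
      rw [← hie]
      exact add_le_add_left (measure_mono hsubU) I
    have h2 : volume U + I < (volume K + ε) + I := by
      exact ENNReal.add_lt_add_right hIfin hUlt
    have h4 : volume K < ε + I := by
      have h3 : volume K + volume K < volume K + (ε + I) := by
        calc volume K + volume K ≤ volume U + I := h1
          _ < (volume K + ε) + I := h2
          _ = volume K + (ε + I) := by rw [add_assoc]
      exact (ENNReal.add_lt_add_iff_left hKfin).mp h3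
    have h5 : volume A < ε + (ε + I) := by
      calc volume A < volume K + ε := hKlt
        _ = ε + volume K := add_comm _ _
        _ < ε + (ε + I) := (ENNReal.add_lt_add_iff_left hεfin).mpr h4
    -- conclude volume A / 2 ≤ I
    have hI2 : volume A / 2 ≤ I := by
      have hsumfin : ε + (ε + I) ≠ ⊤ := by
        simp [ENNReal.add_eq_top, hεfin, hIfin]
      have h5' : (volume A).toReal < ε.toReal + (ε.toReal + I.toReal) := by
        have := (ENNReal.toReal_lt_toReal hAfin hsumfin).mpr h5
        rwa [ENNReal.toReal_add hεfin (by simp [ENNReal.add_eq_top, hεfin, hIfin]),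
          ENNReal.toReal_add hεfin hIfin] at this
      have hεval : ε.toReal = (volume A).toReal / 8 := by
        rw [hεdef, ENNReal.toReal_div]
        norm_num
      have hhalffin : volume A / 2 ≠ ⊤ :=
        ne_top_of_le_ne_top hAfin ENNReal.half_le_self
      have hA0 : 0 < (volume A).toReal := ENNReal.toReal_pos hApos hAfin
      refine (ENNReal.toReal_le_toReal hhalffin hIfin).mp ?_
      rw [ENNReal.toReal_div]
      rw [hεval] at h5'
      norm_num
      linarith
    refine hI2.trans (measure_mono ?_)
    intro y hy
    exact ⟨hAsub (hKA hy.2), hKA hy.1⟩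
  -- Tonelli / swap
  have hswap : (∫⁻ y in A, g y ∂volume) =
      ∫⁻ u in Set.Ioc 0 b, (‖σ' u‖₊ : ENNReal) * volume (((fun y : ℝ => y - u) ⁻¹' E) ∩ A) := by
    have hs := lintegral_lintegral_swap (μ := volume.restrict A)
      (ν := volume.restrict (Set.Ioc 0 b)) hHmeas.aemeasurable
    simp only [hgdef]
    rw [hs]
    refine lintegral_congr_ae (Filter.Eventually.of_forall fun u => ?_)
    have hEu : MeasurableSet ((fun y : ℝ => y - u) ⁻¹' E) := hE.preimage (measurable_sub_const u)
    have hind : ∀ y : ℝ, E.indicator (1 : ℝ → ENNReal) (y - u) =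
        ((fun y : ℝ => y - u) ⁻¹' E).indicator (1 : ℝ → ENNReal) y := by
      intro y
      by_cases h : y - u ∈ E
      · rw [Set.indicator_of_mem h,
          Set.indicator_of_mem (show y ∈ (fun y : ℝ => y - u) ⁻¹' E from h)]
        rfl
      · rw [Set.indicator_of_notMem h,
          Set.indicator_of_notMem (show y ∉ (fun y : ℝ => y - u) ⁻¹' E from h)]
    calc (∫⁻ y in A, H y u ∂volume)
        = ∫⁻ y in A, (‖σ' u‖₊ : ENNReal) *
            ((fun y : ℝ => y - u) ⁻¹' E).indicator (1 : ℝ → ENNReal) y ∂volume := by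
          simp only [hHdef]
          exact lintegral_congr fun y => by rw [hind y]
      _ = (‖σ' u‖₊ : ENNReal) * ∫⁻ y in A,
            ((fun y : ℝ => y - u) ⁻¹' E).indicator (1 : ℝ → ENNReal) y ∂volume :=
          lintegral_const_mul' _ _ (by simp)
      _ = (‖σ' u‖₊ : ENNReal) * volume (((fun y : ℝ => y - u) ⁻¹' E) ∩ A) := by
          rw [lintegral_indicator_one hEu, Measure.restrict_apply hEu]
  have hupper : (∫⁻ y in A, g y ∂volume) ≤ (m : ENNReal) * volume A := by
    calc (∫⁻ y in A, g y ∂volume) ≤ ∫⁻ _ in A, (m : ENNReal) ∂volume :=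
        setLIntegral_mono_ae' hA (Filter.Eventually.of_forall fun y hy => hy.2)
      _ = (m : ENNReal) * volume A := by rw [setLIntegral_const]
  have hIootop : ∫⁻ u in Set.Ioo 0 δ₁, (‖σ' u‖₊ : ENNReal) = ⊤ := by
    have h1 : ∫⁻ u in Set.Ioc 0 δ₁, (‖σ' u‖₊ : ENNReal) = ⊤ :=
      hσtop δ₁ hδ₁pos ((min_le_right _ _).trans hbx)
    rw [← h1]
    congr 1
    exact Measure.restrict_congr_set Ioo_ae_eq_Ioc
  have hhalffin : volume A / 2 ≠ ⊤ := ne_top_of_le_ne_top hAfin ENNReal.half_le_self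
  have hhalfne : volume A / 2 ≠ 0 := by
    simp only [ne_eq, ENNReal.div_eq_zero_iff]
    push_neg
    exact ⟨hApos, by norm_num⟩
  have hlower : (⊤ : ENNReal) ≤ ∫⁻ y in A, g y ∂volume := by
    rw [hswap]
    have hmono : (∫⁻ u in Set.Ioo 0 δ₁, (volume A / 2) * (‖σ' u‖₊ : ENNReal) ∂volume)
        ≤ ∫⁻ u in Set.Ioc 0 b,
            (‖σ' u‖₊ : ENNReal) * volume (((fun y => y - u) ⁻¹' E) ∩ A) ∂volume := by
      refine le_trans (setLIntegral_mono_ae' measurableSet_Ioo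
        (Filter.Eventually.of_forall fun u hu => ?_)) (lintegral_mono_set fun u hu => ?_)
      · rw [mul_comm]
        exact mul_le_mul_right (hkey u hu.1 hu.2) _
      · exact ⟨hu.1, hu.2.le.trans (min_le_right δ b)⟩
    rw [lintegral_const_mul' _ _ hhalffin, hIootop, ENNReal.mul_top hhalfne] at hmono
    exact hmono
  have hcontr : (⊤ : ENNReal) ≤ (m : ENNReal) * volume A := le_trans hlower hupper
  exact (ENNReal.mul_ne_top (ENNReal.natCast_ne_top m) hAfin) (top_le_iff.mp hcontr)

theorem sonine_inversion
    (σ ψ : ℝ → ℝ)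
    (hσ : LocallyIntegrableOn σ (Set.Ioi 0))
    (hψ : LocallyIntegrableOn ψ (Set.Ioi 0))
    (hSonine : ∀ x : ℝ, 0 < x → (∫ t in (0:ℝ)..x, σ (x - t) * ψ t) = 1)
    (φ f : ℝ → ℝ) (hφ : ContinuousOn φ (Set.Ici 0))
    (hEq : ∀ x : ℝ, 0 < x → (∫ τ in (0:ℝ)..x, σ (x - τ) * φ τ) = f x)
    (hfC1 : ContDiffOn ℝ 1 f (Set.Ici 0)) (hf0 : f 0 = 0) :
    ∀ x : ℝ, 0 < x →
      (∫ t in (0:ℝ)..x, ψ (x - t) * f t) = ∫ t in (0:ℝ)..x, φ t := by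
  intro x hx
  set L : ℝ →L[ℝ] ℝ →L[ℝ] ℝ := ContinuousLinearMap.mul ℝ ℝ with hLdef
  have hLapp : ∀ a b : ℝ, L a b = a * b := fun a b => rfl
  -- symmetric Sonine identity
  have hSonine' : ∀ y : ℝ, 0 < y → (∫ t in (0:ℝ)..y, ψ (y - t) * σ t) = 1 := by
    intro y hy
    calc (∫ t in (0:ℝ)..y, ψ (y - t) * σ t)
        = ∫ t in (0:ℝ)..y, σ (y - (y - t)) * ψ (y - t) := by
          refine intervalIntegral.integral_congr fun t _ => ?_
          rw [sub_sub_cancel, mul_comm]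
      _ = 1 := by
          have h2 := intervalIntegral.integral_comp_sub_left
            (fun t => σ (y - t) * ψ t) y (a := 0) (b := y)
          rw [sub_self, sub_zero] at h2
          rw [h2]
          exact hSonine y hy
  have hσI : IntegrableOn σ (Set.Ioc 0 x) :=
    sonine_kernel_integrableOn σ ψ hσ hψ hSonine x hx
  have hψI : IntegrableOn ψ (Set.Ioc 0 x) :=
    sonine_kernel_integrableOn ψ σ hψ hσ hSonine' x hx
  have hφIcc : IntegrableOn φ (Set.Icc 0 x) :=
    (hφ.mono Set.Icc_subset_Ici_self).integrableOn_Icc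
  have hφI : IntegrableOn φ (Set.Ioc 0 x) := hφIcc.mono_set Set.Ioc_subset_Icc_self
  set σ₀ := (Set.Ioc 0 x).indicator σ with hσ₀def
  set ψ₀ := (Set.Ioc 0 x).indicator ψ with hψ₀def
  set φ₀ := (Set.Ioc 0 x).indicator φ with hφ₀def
  have hσ₀ : Integrable σ₀ := (integrable_indicator_iff measurableSet_Ioc).mpr hσI
  have hψ₀ : Integrable ψ₀ := (integrable_indicator_iff measurableSet_Ioc).mpr hψI
  have hφ₀ : Integrable φ₀ := (integrable_indicator_iff measurableSet_Ioc).mpr hφI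
  obtain ⟨M, hM⟩ := (isCompact_Icc : IsCompact (Set.Icc (0:ℝ) x)).exists_bound_of_continuousOn
    (hφ.mono Set.Icc_subset_Ici_self)
  have hφ₀bdd : ∀ y, ‖φ₀ y‖ ≤ max M 0 := by
    intro y
    by_cases h : y ∈ Set.Ioc 0 x
    · rw [hφ₀def, Set.indicator_of_mem h]
      exact (hM y ⟨h.1.le, h.2⟩).trans (le_max_left _ _)
    · rw [hφ₀def, Set.indicator_of_notMem h]
      simp [le_max_right]
  -- convolutions vanish at nonpositive points
  have hconv_nonpos : ∀ (F G : ℝ → ℝ) (y : ℝ), y ≤ 0 →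
      convolution ((Set.Ioc 0 x).indicator F) ((Set.Ioc 0 x).indicator G) L volume y = 0 := by
    intro F G y hy
    rw [convolution_def]
    have hz : ∀ t : ℝ, L ((Set.Ioc 0 x).indicator F t) ((Set.Ioc 0 x).indicator G (y - t)) = 0 := by
      intro t
      by_cases h : t ∈ Set.Ioc 0 x
      · have h2 : y - t ∉ Set.Ioc 0 x := fun hc => absurd hc.1 (by push_neg; linarith [h.1])
        rw [Set.indicator_of_notMem h2]
        simp
      · rw [Set.indicator_of_notMem h]
        simp [hLapp]
    simp only [hz, MeasureTheory.integral_zero]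
  -- (σ₀ ⋆ φ₀) agrees with f on (0, x)
  have hσφ : ∀ t ∈ Set.Ioo 0 x, convolution σ₀ φ₀ L volume t = f t := by
    intro t ht
    have h1 : ∀ s : ℝ, L (σ₀ s) (φ₀ (t - s)) =
        (Set.Ioo 0 t).indicator (fun s => σ s * φ (t - s)) s := by
      intro s
      by_cases hs : s ∈ Set.Ioo 0 t
      · rw [Set.indicator_of_mem hs, hσ₀def, hφ₀def,
          Set.indicator_of_mem (show s ∈ Set.Ioc 0 x from ⟨hs.1, hs.2.le.trans ht.2.le⟩),
          Set.indicator_of_mem (show t - s ∈ Set.Ioc 0 x from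
            ⟨by linarith [hs.2], by linarith [ht.2, hs.1]⟩)]
        exact hLapp _ _
      · rw [Set.indicator_of_notMem hs]
        rcases le_or_gt s 0 with h | h
        · rw [hσ₀def, Set.indicator_of_notMem
            (show s ∉ Set.Ioc 0 x from fun hc => absurd hc.1 (not_lt.mpr h))]
          simp [hLapp]
        · have hst : t ≤ s := by
            by_contra hc; push_neg at hc; exact hs ⟨h, hc⟩
          rw [hφ₀def, Set.indicator_of_notMem
            (show t - s ∉ Set.Ioc 0 x from fun hc => by
              have := hc.1; linarith)]
          simp [hLapp]
    rw [convolution_def]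
    calc (∫ s, L (σ₀ s) (φ₀ (t - s)))
        = ∫ s, (Set.Ioo 0 t).indicator (fun s => σ s * φ (t - s)) s :=
          integral_congr_ae (Filter.Eventually.of_forall h1)
      _ = ∫ s in Set.Ioo 0 t, σ s * φ (t - s) := integral_indicator measurableSet_Ioo
      _ = ∫ s in Set.Ioc 0 t, σ s * φ (t - s) := integral_Ioc_eq_integral_Ioo.symm
      _ = ∫ s in (0:ℝ)..t, σ s * φ (t - s) := (intervalIntegral.integral_of_le ht.1.le).symm
      _ = ∫ s in (0:ℝ)..t, σ (t - (t - s)) * φ (t - s) :=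
          intervalIntegral.integral_congr fun s _ => by rw [sub_sub_cancel]
      _ = ∫ s in (0:ℝ)..t, σ (t - s) * φ s := by
          have h2 := intervalIntegral.integral_comp_sub_left
            (fun s => σ (t - s) * φ s) t (a := 0) (b := t)
          rw [sub_self, sub_zero] at h2
          exact h2
      _ = f t := hEq t ht.1
  -- (ψ₀ ⋆ σ₀) is 1 on (0, x)
  have hψσ : ∀ y ∈ Set.Ioo 0 x, convolution ψ₀ σ₀ L volume y = 1 := by
    intro y hy
    have h1 : ∀ s : ℝ, L (ψ₀ s) (σ₀ (y - s)) =
        (Set.Ioo 0 y).indicator (fun s => ψ s * σ (y - s)) s := by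
      intro s
      by_cases hs : s ∈ Set.Ioo 0 y
      · rw [Set.indicator_of_mem hs, hψ₀def, hσ₀def,
          Set.indicator_of_mem (show s ∈ Set.Ioc 0 x from ⟨hs.1, hs.2.le.trans hy.2.le⟩),
          Set.indicator_of_mem (show y - s ∈ Set.Ioc 0 x from
            ⟨by linarith [hs.2], by linarith [hy.2, hs.1]⟩)]
        exact hLapp _ _
      · rw [Set.indicator_of_notMem hs]
        rcases le_or_gt s 0 with h | h
        · rw [hψ₀def, Set.indicator_of_notMem
            (show s ∉ Set.Ioc 0 x from fun hc => absurd hc.1 (not_lt.mpr h))]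
          simp [hLapp]
        · have hst : y ≤ s := by
            by_contra hc; push_neg at hc; exact hs ⟨h, hc⟩
          rw [hσ₀def, Set.indicator_of_notMem
            (show y - s ∉ Set.Ioc 0 x from fun hc => by
              have := hc.1; linarith)]
          simp [hLapp]
    rw [convolution_def]
    calc (∫ s, L (ψ₀ s) (σ₀ (y - s)))
        = ∫ s, (Set.Ioo 0 y).indicator (fun s => ψ s * σ (y - s)) s :=
          integral_congr_ae (Filter.Eventually.of_forall h1)
      _ = ∫ s in Set.Ioo 0 y, ψ s * σ (y - s) := integral_indicator measurableSet_Ioo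
      _ = ∫ s in Set.Ioc 0 y, ψ s * σ (y - s) := integral_Ioc_eq_integral_Ioo.symm
      _ = ∫ s in (0:ℝ)..y, ψ s * σ (y - s) := (intervalIntegral.integral_of_le hy.1.le).symm
      _ = ∫ s in (0:ℝ)..y, ψ (y - (y - s)) * σ (y - s) :=
          intervalIntegral.integral_congr fun s _ => by rw [sub_sub_cancel]
      _ = ∫ s in (0:ℝ)..y, ψ (y - s) * σ s := by
          have h2 := intervalIntegral.integral_comp_sub_left
            (fun s => ψ (y - s) * σ s) y (a := 0) (b := y)
          rw [sub_self, sub_zero] at h2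
          exact h2
      _ = 1 := hSonine' y hy.1
  -- left-hand side as an iterated convolution
  have hLHS : convolution ψ₀ (convolution σ₀ φ₀ L volume) L volume x
      = ∫ t in (0:ℝ)..x, ψ (x - t) * f t := by
    rw [convolution_def]
    calc (∫ t, L (ψ₀ t) (convolution σ₀ φ₀ L volume (x - t)))
        = ∫ t, (Set.Ioo 0 x).indicator (fun t => ψ t * f (x - t)) t := by
          refine integral_congr_ae (Filter.Eventually.of_forall fun t => ?_)
          beta_reduce
          by_cases ht : t ∈ Set.Ioo 0 x
          · rw [Set.indicator_of_mem ht, hψ₀def,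
              Set.indicator_of_mem (show t ∈ Set.Ioc 0 x from ⟨ht.1, ht.2.le⟩),
              hσφ (x - t) ⟨by linarith [ht.2], by linarith [ht.1]⟩]
            exact hLapp _ _
          · rw [Set.indicator_of_notMem ht]
            rcases le_or_gt t 0 with h | h
            · rw [hψ₀def, Set.indicator_of_notMem
                (show t ∉ Set.Ioc 0 x from fun hc => absurd hc.1 (not_lt.mpr h))]
              simp [hLapp]
            · have hxt : x ≤ t := by
                by_contra hc; push_neg at hc; exact ht ⟨h, hc⟩
              rw [hconv_nonpos σ φ (x - t) (by linarith)]
              simp [hLapp]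
      _ = ∫ t in Set.Ioo 0 x, ψ t * f (x - t) := integral_indicator measurableSet_Ioo
      _ = ∫ t in (0:ℝ)..x, ψ t * f (x - t) := by
          rw [intervalIntegral.integral_of_le hx.le, integral_Ioc_eq_integral_Ioo]
      _ = ∫ t in (0:ℝ)..x, ψ (x - (x - t)) * f (x - t) :=
          intervalIntegral.integral_congr fun t _ => by rw [sub_sub_cancel]
      _ = ∫ t in (0:ℝ)..x, ψ (x - t) * f t := by
          have h2 := intervalIntegral.integral_comp_sub_left
            (fun t => ψ (x - t) * f t) x (a := 0) (b := x)
          rw [sub_self, sub_zero] at h2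
          exact h2
  -- right-hand side as an iterated convolution
  have hRHS : convolution (convolution ψ₀ σ₀ L volume) φ₀ L volume x
      = ∫ t in (0:ℝ)..x, φ t := by
    rw [convolution_def]
    calc (∫ t, L (convolution ψ₀ σ₀ L volume t) (φ₀ (x - t)))
        = ∫ t, (Set.Ioo 0 x).indicator (fun t => φ (x - t)) t := by
          refine integral_congr_ae (Filter.Eventually.of_forall fun t => ?_)
          beta_reduce
          by_cases ht : t ∈ Set.Ioo 0 x
          · rw [Set.indicator_of_mem ht, hψσ t ht, hφ₀def,
              Set.indicator_of_mem (show x - t ∈ Set.Ioc 0 x from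
                ⟨by linarith [ht.2], by linarith [ht.1]⟩)]
            rw [hLapp, one_mul]
          · rw [Set.indicator_of_notMem ht]
            rcases le_or_gt t 0 with h | h
            · rw [hconv_nonpos ψ σ t h]
              simp [hLapp]
            · have hxt : x ≤ t := by
                by_contra hc; push_neg at hc; exact ht ⟨h, hc⟩
              rw [hφ₀def, Set.indicator_of_notMem
                (show x - t ∉ Set.Ioc 0 x from fun hc => by
                  have := hc.1; linarith)]
              simp [hLapp]
      _ = ∫ t in Set.Ioo 0 x, φ (x - t) := integral_indicator measurableSet_Ioo
      _ = ∫ t in (0:ℝ)..x, φ (x - t) := by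
          rw [intervalIntegral.integral_of_le hx.le, integral_Ioc_eq_integral_Ioo]
      _ = ∫ t in (0:ℝ)..x, φ t := by
          have h2 := intervalIntegral.integral_comp_sub_left φ x (a := 0) (b := x)
          rw [sub_self, sub_zero] at h2
          exact h2
  -- associativity of convolution
  set C := convolution (fun t => ‖σ₀ t‖) (fun t => ‖φ₀ t‖) (ContinuousLinearMap.mul ℝ ℝ) volume
    with hCdef
  have hCint : Integrable C := hσ₀.norm.integrable_convolution (ContinuousLinearMap.mul ℝ ℝ) hφ₀.norm
  have hCnonneg : ∀ y, 0 ≤ C y := by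
    intro y
    rw [hCdef, convolution_def]
    exact integral_nonneg fun s => mul_nonneg (norm_nonneg _) (norm_nonneg _)
  have hCbdd : ∀ y, C y ≤ (max M 0) * ∫ s, ‖σ₀ s‖ := by
    intro y
    rw [hCdef, convolution_def]
    have hint : Integrable (fun s => ‖σ₀ s‖ * (max M 0)) := hσ₀.norm.mul_const _
    calc (∫ s, (ContinuousLinearMap.mul ℝ ℝ) ‖σ₀ s‖ ‖φ₀ (y - s)‖)
        ≤ ∫ s, ‖σ₀ s‖ * (max M 0) := by
          refine integral_mono_of_nonneg
            (Filter.Eventually.of_forall fun s => mul_nonneg (norm_nonneg _) (norm_nonneg _))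
            hint (Filter.Eventually.of_forall fun s => ?_)
          exact mul_le_mul_of_nonneg_left (hφ₀bdd _) (norm_nonneg _)
      _ = (max M 0) * ∫ s, ‖σ₀ s‖ := by
          rw [MeasureTheory.integral_mul_const]
          exact mul_comm _ _
  have hfgk : ConvolutionExistsAt (fun t => ‖ψ₀ t‖) C x (ContinuousLinearMap.mul ℝ ℝ) volume := by
    have h1 : Integrable (fun t => C (x - t) * ‖ψ₀ t‖) := by
      apply Integrable.bdd_mul (c := (max M 0) * ∫ s, ‖σ₀ s‖) hψ₀.norm
      · exact hCint.aestronglyMeasurable.comp_quasiMeasurePreserving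
          (quasiMeasurePreserving_sub_left_of_right_invariant volume x)
      · refine Filter.Eventually.of_forall fun t => ?_
        rw [Real.norm_eq_abs, abs_of_nonneg (hCnonneg _)]
        exact hCbdd _
    exact h1.congr (Filter.Eventually.of_forall fun t => mul_comm _ _)
  have hassoc := convolution_assoc L L L L (fun a b c => mul_assoc a b c) (x₀ := x)
    hψ₀.aestronglyMeasurable hσ₀.aestronglyMeasurable hφ₀.aestronglyMeasurable
    (hψ₀.ae_convolution_exists L hσ₀)
    (hσ₀.norm.ae_convolution_exists (ContinuousLinearMap.mul ℝ ℝ) hφ₀.norm)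
    hfgk
  rw [← hLHS, ← hassoc, hRHS]
end

section
/- Let 0 < α < 1 and let f be continuously differentiable on [a, x]. Then d/dx [ (1/Γ(1-α)) ∫_a^x (x-τ)^{-α} f(τ) dτ ] = f(a)(x-a)^{-α}/Γ(1-α) + (1/Γ(1-α)) ∫_a^x (x-τ)^{-α} f'(τ) dτ. -/
open intervalIntegral Real
open Set MeasureTheory

lemma subst_aux (a y β : ℝ) (hay : a < y) (H : ℝ → ℝ) :
    ∫ τ in a..y, (y - τ) ^ β * H τ
      = (y - a) ^ (β + 1) * ∫ s in (0:ℝ)..1, (1 - s) ^ β * H (a + s * (y - a)) := by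
  have hc : (y - a) ≠ 0 := by linarith
  have hcpos : (0:ℝ) < y - a := by linarith
  set φ : ℝ → ℝ := fun τ => ((y - τ) / (y - a)) ^ β * H τ with hφ
  have h1 : ∫ s in (0:ℝ)..1, φ ((y - a) * s + a)
      = (y - a)⁻¹ • ∫ τ in (y-a)*0 + a..(y-a)*1 + a, φ τ :=
    integral_comp_mul_add φ hc a
  have h2 : ∀ s : ℝ, φ ((y - a) * s + a) = (1 - s) ^ β * H (a + s * (y - a)) := by
    intro s
    have e2 : (y - a) * s + a = a + s * (y - a) := by ring
    have e1 : (y - (a + s * (y - a))) / (y - a) = 1 - s := by field_simp; ring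
    rw [hφ]; simp only [e2, e1]
  simp only [h2] at h1
  have h3 : ∫ τ in a..y, φ τ = (∫ τ in a..y, (y - τ) ^ β * H τ) / (y - a) ^ β := by
    rw [← intervalIntegral.integral_div]
    apply intervalIntegral.integral_congr
    intro τ hτ
    rw [uIcc_of_le hay.le] at hτ
    have h4 : (0:ℝ) ≤ y - τ := by linarith [hτ.2]
    simp only [hφ]
    rw [div_rpow h4 hcpos.le]
    ring
  rw [show (y-a)*0 + a = a by ring, show (y-a)*1 + a = y by ring, h3] at h1
  rw [h1]
  have h5 : (y - a) ^ (β + 1) = (y - a) ^ β * (y - a) := by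
    rw [Real.rpow_add hcpos, Real.rpow_one]
  have h6 : (y - a) ^ β ≠ 0 := ne_of_gt (Real.rpow_pos_of_pos hcpos β)
  rw [h5, smul_eq_mul]
  field_simp


lemma ext_aux (a x : ℝ) (hax : a < x) (f : ℝ → ℝ) (hf : ContDiffOn ℝ 1 f (Set.Icc a x)) :
    ∃ F G : ℝ → ℝ, Continuous G ∧ (∀ y, HasDerivAt F (G y) y) ∧
      Set.EqOn F f (Set.Icc a x) ∧ Set.EqOn G (derivWithin f (Set.Icc a x)) (Set.Icc a x) := by
  set g := derivWithin f (Set.Icc a x) with hgdef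
  have hg : ContinuousOn g (Icc a x) :=
    hf.continuousOn_derivWithin (uniqueDiffOn_Icc hax) le_rfl
  have hfd : ∀ y ∈ Icc a x, HasDerivWithinAt f (g y) (Icc a x) y := fun y hy =>
    ((hf.differentiableOn one_ne_zero) y hy).hasDerivWithinAt
  set G : ℝ → ℝ := fun y => g (max a (min x y)) with hGdef
  set F : ℝ → ℝ := fun y => if y < a then f a + (y - a) * g a
    else if y ≤ x then f y else f x + (y - x) * g x with hFdef
  have hproj : ∀ y : ℝ, max a (min x y) ∈ Icc a x :=
    fun y => ⟨le_max_left _ _, max_le hax.le (min_le_left _ _)⟩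
  have hGcont : Continuous G := by
    apply hg.comp_continuous
    · exact continuous_const.max (continuous_const.min continuous_id)
    · exact hproj
  have hGa : G a = g a := by
    simp only [hGdef, min_eq_right hax.le, max_self]
  have hGx : G x = g x := by
    simp only [hGdef, min_self, max_eq_right hax.le]
  have hFf : Set.EqOn F f (Set.Icc a x) := by
    intro y hy
    simp only [hFdef, not_lt.2 hy.1, if_neg, if_pos hy.2]
    simp [not_lt.2 hy.1, hy.2]
  have hGg : Set.EqOn G g (Set.Icc a x) := by
    intro y hy
    simp only [hGdef, min_eq_right hy.2, max_eq_right hy.1]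
  -- linear pieces
  have hL1 : ∀ y : ℝ, HasDerivAt (fun z => f a + (z - a) * g a) (g a) y := by
    intro y
    simpa using (((hasDerivAt_id y).sub_const a).mul_const (g a)).const_add (f a)
  have hL2 : ∀ y : ℝ, HasDerivAt (fun z => f x + (z - x) * g x) (g x) y := by
    intro y
    simpa using (((hasDerivAt_id y).sub_const x).mul_const (g x)).const_add (f x)
  have hFa_eqL1 : ∀ z ∈ Iic a, F z = f a + (z - a) * g a := by
    intro z hz
    rcases lt_or_eq_of_le (mem_Iic.mp hz) with h | h
    · simp [hFdef, h]
    · subst h; simp [hFdef, lt_irrefl, hax.le, hFf ⟨le_rfl, hax.le⟩]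
  have hFx_eqL2 : ∀ z ∈ Ici x, F z = f x + (z - x) * g x := by
    intro z hz
    rcases lt_or_eq_of_le (mem_Ici.mp hz) with h | h
    · have h1 : ¬ z < a := by push_neg; linarith
      have h2 : ¬ z ≤ x := by push_neg; exact h
      simp [hFdef, h1, h2]
    · subst h; simp [hFdef, not_lt.2 hax.le, hFf ⟨hax.le, le_rfl⟩]
  have hD : ∀ y, HasDerivAt F (G y) y := by
    intro y
    rcases lt_trichotomy y a with hy | hy | hy
    · -- y < a
      have hGy : G y = g a := by
        simp only [hGdef, min_eq_right (by linarith : y ≤ x), max_eq_left hy.le]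
      rw [hGy]
      apply (hL1 y).congr_of_eventuallyEq
      filter_upwards [Iio_mem_nhds hy] with z hz
      exact hFa_eqL1 z (mem_Iic.mpr (le_of_lt hz))
    · -- y = a
      subst hy
      rw [hGa]
      have left : HasDerivWithinAt F (g y) (Iic y) y :=
        ((hL1 y).hasDerivWithinAt).congr hFa_eqL1 (hFa_eqL1 y (mem_Iic.mpr le_rfl))
      have right : HasDerivWithinAt F (g y) (Ici y) y := by
        have h1 : HasDerivWithinAt f (g y) (Icc y x) y := hfd y ⟨le_rfl, hax.le⟩
        have h2 : HasDerivWithinAt F (g y) (Icc y x) y :=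
          h1.congr (fun z hz => hFf hz) (hFf ⟨le_rfl, hax.le⟩)
        exact h2.mono_of_mem_nhdsWithin (Icc_mem_nhdsGE_of_mem ⟨le_rfl, hax⟩)
      have := left.union right
      rw [Iic_union_Ici] at this
      exact this.hasDerivAt (by simp)
    · rcases lt_trichotomy y x with hy2 | hy2 | hy2
      · -- a < y < x
        have hGy : G y = g y := hGg ⟨hy.le, hy2.le⟩
        rw [hGy]
        have h1 : HasDerivAt f (g y) y :=
          (hfd y ⟨hy.le, hy2.le⟩).hasDerivAt (Icc_mem_nhds hy hy2)
        apply h1.congr_of_eventuallyEq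
        filter_upwards [Icc_mem_nhds hy hy2] with z hz
        exact hFf hz
      · -- y = x
        subst hy2
        rw [hGx]
        have right : HasDerivWithinAt F (g y) (Ici y) y :=
          ((hL2 y).hasDerivWithinAt).congr hFx_eqL2 (hFx_eqL2 y (mem_Ici.mpr le_rfl))
        have left : HasDerivWithinAt F (g y) (Iic y) y := by
          have h1 : HasDerivWithinAt f (g y) (Icc a y) y := hfd y ⟨hax.le, le_rfl⟩
          have h2 : HasDerivWithinAt F (g y) (Icc a y) y :=
            h1.congr (fun z hz => hFf hz) (hFf ⟨hax.le, le_rfl⟩)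
          exact h2.mono_of_mem_nhdsWithin (Icc_mem_nhdsLE_of_mem ⟨hax, le_rfl⟩)
        have := left.union right
        rw [Iic_union_Ici] at this
        exact this.hasDerivAt (by simp)
      · -- y > x
        have hGy : G y = g x := by
          simp only [hGdef, min_eq_left hy2.le, max_eq_right hax.le]
        rw [hGy]
        apply (hL2 y).congr_of_eventuallyEq
        filter_upwards [Ioi_mem_nhds hy2] with z hz
        exact hFx_eqL2 z (mem_Ici.mpr (le_of_lt hz))
  exact ⟨F, G, hGcont, hD, hFf, hGg⟩

lemma base_int {β : ℝ} (hβ : -1 < β) :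
    IntervalIntegrable (fun s : ℝ => (1 - s) ^ β) volume 0 1 := by
  have h := (intervalIntegrable_rpow' (a := 1) (b := 0) hβ).comp_sub_left 1
  simpa using h

lemma rpow_mul_int {β : ℝ} (hβ : -1 < β) {H : ℝ → ℝ} (hH : ContinuousOn H (uIcc 0 1)) :
    IntervalIntegrable (fun s : ℝ => (1 - s) ^ β * H s) volume 0 1 :=
  (base_int hβ).mul_continuousOn hH

lemma keyB (a x α : ℝ) (hax : a < x) (hα0 : 0 < α) (hα1 : α < 1)
    (F G : ℝ → ℝ) (hFd : ∀ y, HasDerivAt F (G y) y) (hG : Continuous G) :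
    HasDerivAt (fun y => ∫ τ in a..y, (y - τ) ^ (-α) * F τ)
      (F a * (x - a) ^ (-α) + ∫ τ in a..x, (x - τ) ^ (-α) * G τ) x := by
  have hFdiff : Differentiable ℝ F := fun y => (hFd y).differentiableAt
  have hF : Continuous F := hFdiff.continuous
  have hh : (0:ℝ) < x - a := by linarith
  set J : ℝ → ℝ := fun y => ∫ s in (0:ℝ)..1, (1 - s) ^ (-α) * F (a + s * (y - a)) with hJdef
  set Jx' : ℝ → ℝ := fun y => ∫ s in (0:ℝ)..1, (1 - s) ^ (-α) * (s * G (a + s * (y - a)))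
    with hJx'def
  have hαne : -α < (1:ℝ) - 1 := by linarith
  have hβ : (-1:ℝ) < -α := by linarith
  have hβ' : (-1:ℝ) < 1 - α := by linarith
  -- affine map continuity helper
  have haff : ∀ y : ℝ, Continuous fun s : ℝ => F (a + s * (y - a)) := by
    intro y
    exact hF.comp (continuous_const.add (continuous_id.mul continuous_const))
  have haffG : ∀ y : ℝ, Continuous fun s : ℝ => G (a + s * (y - a)) := by
    intro y
    exact hG.comp (continuous_const.add (continuous_id.mul continuous_const))
  -- bound for G on a compact set
  obtain ⟨C, hC⟩ := (isCompact_Icc (a := a - (|x - a| + 1)) (b := a + (|x - a| + 1))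
    ).exists_bound_of_continuousOn hG.continuousOn
  have hmemK : ∀ s : ℝ, s ∈ Set.Ioc (0:ℝ) 1 → ∀ y ∈ Metric.ball x 1,
      a + s * (y - a) ∈ Icc (a - (|x - a| + 1)) (a + (|x - a| + 1)) := by
    intro s hs y hy
    have h1 : |y - a| ≤ |x - a| + 1 := by
      have := abs_sub_abs_le_abs_sub (y - a) (x - a)
      have h2 : |y - a - (x - a)| = |y - x| := by ring_nf
      have h3 : |y - x| < 1 := by
        rw [Metric.mem_ball, Real.dist_eq] at hy; exact hy
      calc |y - a| ≤ |x - a| + |y - a - (x - a)| := by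
            have := abs_sub_abs_le_abs_sub (y-a) (x-a); linarith [abs_sub_abs_le_abs_sub (y-a) (x-a)]
        _ ≤ |x - a| + 1 := by rw [h2]; linarith
    have h4 : |s * (y - a)| ≤ |x - a| + 1 := by
      rw [abs_mul]
      have hs1 : |s| ≤ 1 := by rw [abs_of_pos hs.1]; exact hs.2
      calc |s| * |y - a| ≤ 1 * (|x - a| + 1) := by
            apply mul_le_mul hs1 h1 (abs_nonneg _) zero_le_one
        _ = |x - a| + 1 := one_mul _
    rw [abs_le] at h4
    constructor <;> linarith [h4.1, h4.2]
  -- measurability helper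
  have hmeas : ∀ (H : ℝ → ℝ), Continuous H → ∀ y : ℝ,
      AEStronglyMeasurable (fun s : ℝ => (1 - s) ^ (-α) * H s)
        (volume.restrict (Set.uIoc (0:ℝ) 1)) := by
    intro H hH y
    have : Measurable fun s : ℝ => (1 - s) ^ (-α) * H s := by fun_prop
    exact this.aestronglyMeasurable
  -- the parametric derivative of J
  have hJ : HasDerivAt J (Jx' x) x := by
    have key := intervalIntegral.hasDerivAt_integral_of_dominated_loc_of_deriv_le
      (μ := volume) (a := (0:ℝ)) (b := 1) (x₀ := x)
      (F := fun y s => (1 - s) ^ (-α) * F (a + s * (y - a)))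
      (F' := fun y s => (1 - s) ^ (-α) * (s * G (a + s * (y - a))))
      (bound := fun s => (1 - s) ^ (-α) * C) (s := Metric.ball x 1) (Metric.ball_mem_nhds x one_pos)
      ?_ ?_ ?_ ?_ ?_ ?_
    · exact key.2
    · filter_upwards with y
      exact hmeas _ (haff y) y
    · exact rpow_mul_int hβ ((haff x).continuousOn)
    · have : Measurable fun s : ℝ => (1 - s) ^ (-α) * (s * G (a + s * (x - a))) := by fun_prop
      exact this.aestronglyMeasurable
    · apply Filter.Eventually.of_forall
      intro s hs y hy
      rw [Set.uIoc_of_le zero_le_one] at hs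
      have h0 : (0:ℝ) ≤ (1 - s) ^ (-α) := Real.rpow_nonneg (by linarith [hs.2]) _
      have hGb : |G (a + s * (y - a))| ≤ C := by
        have := hC _ (hmemK s hs y hy)
        simpa [Real.norm_eq_abs] using this
      have hs1 : |s| ≤ 1 := by rw [abs_of_pos hs.1]; exact hs.2
      rw [Real.norm_eq_abs, abs_mul, abs_mul]
      rw [abs_of_nonneg h0]
      apply mul_le_mul_of_nonneg_left _ h0
      calc |s| * |G (a + s * (y - a))| ≤ 1 * C :=
            mul_le_mul hs1 hGb (abs_nonneg _) zero_le_one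
        _ = C := one_mul _
    · exact (base_int hβ).mul_const C
    · apply Filter.Eventually.of_forall
      intro s hs y hy
      have inner : HasDerivAt (fun y : ℝ => a + s * (y - a)) s y := by
        simpa using (((hasDerivAt_id y).sub_const a).const_mul s).const_add a
      have comp := (hFd (a + s * (y - a))).comp y inner
      have h2 := comp.const_mul ((1 - s) ^ (-α))
      have h3 : (1 - s) ^ (-α) * (G (a + s * (y - a)) * s)
          = (1 - s) ^ (-α) * (s * G (a + s * (y - a))) := by ring
      rw [h3] at h2
      exact h2
  -- derivative of the power factor
  have hP : HasDerivAt (fun y : ℝ => (y - a) ^ ((1:ℝ) - α)) ((1 - α) * (x - a) ^ (-α)) x := by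
    have h1 := Real.hasDerivAt_rpow_const (x := x - a) (p := 1 - α) (Or.inl (ne_of_gt hh))
    have inner : HasDerivAt (fun y : ℝ => y - a) 1 x := (hasDerivAt_id x).sub_const a
    have := h1.comp x inner
    simpa [Function.comp_def, show (1:ℝ) - α - 1 = -α by ring] using this
  have hmul := hP.mul hJ
  -- identify the function near x
  have heq : (fun y => ∫ τ in a..y, (y - τ) ^ (-α) * F τ)
      =ᶠ[nhds x] fun y => (y - a) ^ ((1:ℝ) - α) * J y := by
    filter_upwards [Ioi_mem_nhds hax] with y hy
    have := subst_aux a y (-α) hy F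
    rwa [show -α + 1 = (1:ℝ) - α by ring] at this
  have key1 := hmul.congr_of_eventuallyEq heq
  -- now identify the derivative value
  set A : ℝ := ∫ s in (0:ℝ)..1, (1 - s) ^ (-α) * G (a + s * (x - a)) with hAdef
  set B : ℝ := ∫ s in (0:ℝ)..1, (1 - s) ^ ((1:ℝ) - α) * G (a + s * (x - a)) with hBdef
  have hGcont01 : ContinuousOn (fun s : ℝ => G (a + s * (x - a))) (uIcc 0 1) :=
    (haffG x).continuousOn
  have hFcont01 : ContinuousOn (fun s : ℝ => F (a + s * (x - a))) (uIcc 0 1) :=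
    (haff x).continuousOn
  have intA : IntervalIntegrable (fun s : ℝ => (1 - s) ^ (-α) * G (a + s * (x - a)))
      volume 0 1 := rpow_mul_int hβ hGcont01
  have intB : IntervalIntegrable (fun s : ℝ => (1 - s) ^ ((1:ℝ) - α) * G (a + s * (x - a)))
      volume 0 1 := rpow_mul_int hβ' hGcont01
  have intAF : IntervalIntegrable (fun s : ℝ => (1 - s) ^ (-α) * F (a + s * (x - a)))
      volume 0 1 := rpow_mul_int hβ hFcont01
  have s1 : ∫ τ in a..x, (x - τ) ^ (-α) * G τ = (x - a) ^ ((1:ℝ) - α) * A := by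
    have := subst_aux a x (-α) hax G
    rwa [show -α + 1 = (1:ℝ) - α by ring] at this
  have s2 : Jx' x = A - B := by
    have hpt : ∀ s ∈ uIcc (0:ℝ) 1, (1 - s) ^ (-α) * (s * G (a + s * (x - a)))
        = (1 - s) ^ (-α) * G (a + s * (x - a)) - (1 - s) ^ ((1:ℝ) - α) * G (a + s * (x - a)) := by
      intro s hs
      rw [uIcc_of_le zero_le_one] at hs
      rcases eq_or_lt_of_le hs.2 with h | h
      · subst h
        simp [Real.zero_rpow (ne_of_lt (neg_neg_of_pos hα0)),
          Real.zero_rpow (by linarith : (1:ℝ) - α ≠ 0)]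
      · have h1 : (0:ℝ) < 1 - s := by linarith
        have h2 : (1 - s) ^ ((1:ℝ) - α) = (1 - s) ^ (-α) * (1 - s) := by
          rw [show (1:ℝ) - α = -α + 1 by ring, Real.rpow_add h1, Real.rpow_one]
        rw [h2]; ring
    simp only [hJx'def]
    rw [intervalIntegral.integral_congr hpt, intervalIntegral.integral_sub intA intB]
  have s3 : (1 - α) * J x - (x - a) * B = F a := by
    set u : ℝ → ℝ := fun s => -((1 - s) ^ ((1:ℝ) - α) * F (a + s * (x - a))) with hudef
    set w : ℝ → ℝ := fun s => (1 - α) * ((1 - s) ^ (-α) * F (a + s * (x - a)))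
      - (x - a) * ((1 - s) ^ ((1:ℝ) - α) * G (a + s * (x - a))) with hwdef
    have c1 : Continuous fun s : ℝ => (1 - s) ^ ((1:ℝ) - α) := by
      apply continuous_iff_continuousAt.mpr
      intro s
      exact (Real.continuousAt_rpow_const _ _ (Or.inr (by linarith))).comp
        ((continuous_const.sub continuous_id).continuousAt)
    have hucont : ContinuousOn u (Icc 0 1) :=
      ((c1.mul (haff x)).neg).continuousOn
    have huderiv : ∀ s ∈ Ioo (0:ℝ) 1, HasDerivWithinAt u (w s) (Ioi s) s := by
      intro s hs
      have h1s : (0:ℝ) < 1 - s := by linarith [hs.2]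
      have inner1 : HasDerivAt (fun s : ℝ => (1 - s) ^ ((1:ℝ) - α))
          (-((1 - α) * (1 - s) ^ (-α))) s := by
        have h1 := Real.hasDerivAt_rpow_const (x := 1 - s) (p := 1 - α)
          (Or.inl (ne_of_gt h1s))
        have inner : HasDerivAt (fun s : ℝ => 1 - s) (-1) s := by
          simpa using (hasDerivAt_id s).const_sub 1
        have := h1.comp s inner
        rw [show (1:ℝ) - α - 1 = -α by ring] at this
        refine HasDerivAt.congr_deriv this ?_
        ring
      have inner2 : HasDerivAt (fun s : ℝ => F (a + s * (x - a)))
          ((x - a) * G (a + s * (x - a))) s := by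
        have innerA : HasDerivAt (fun s : ℝ => a + s * (x - a)) (x - a) s := by
          simpa using ((hasDerivAt_id s).mul_const (x - a)).const_add a
        have h4 := (hFd (a + s * (x - a))).comp s innerA
        have h5 : G (a + s * (x - a)) * (x - a) = (x - a) * G (a + s * (x - a)) := by ring
        rw [h5] at h4
        exact h4
      have := (inner1.mul inner2).neg
      have heq : w s = -((-((1 - α) * (1 - s) ^ (-α))) * F (a + s * (x - a))
          + (1 - s) ^ ((1:ℝ) - α) * ((x - a) * G (a + s * (x - a)))) := by
        rw [hwdef]; ring
      rw [heq]
      exact this.hasDerivWithinAt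
    have hwint : IntervalIntegrable w volume 0 1 := by
      apply IntervalIntegrable.sub
      · exact intAF.const_mul _
      · exact intB.const_mul _
    have ftc := intervalIntegral.integral_eq_sub_of_hasDeriv_right_of_le zero_le_one
      hucont huderiv hwint
    have hu1 : u 1 = 0 := by
      simp [hudef, Real.zero_rpow (by linarith : (1:ℝ) - α ≠ 0)]
    have hu0 : u 0 = -F a := by
      simp [hudef, Real.one_rpow]
    rw [hu1, hu0] at ftc
    have hsplit : ∫ s in (0:ℝ)..1, w s = (1 - α) * J x - (x - a) * B := by
      rw [hwdef]
      rw [intervalIntegral.integral_sub (intAF.const_mul _) (intB.const_mul _)]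
      rw [intervalIntegral.integral_const_mul, intervalIntegral.integral_const_mul]
    rw [hsplit] at ftc
    linarith [ftc]
  -- final algebra
  have hpow : (x - a) ^ ((1:ℝ) - α) = (x - a) ^ (-α) * (x - a) := by
    rw [show (1:ℝ) - α = -α + 1 by ring, Real.rpow_add hh, Real.rpow_one]
  have hD : (1 - α) * (x - a) ^ (-α) * J x + (x - a) ^ ((1:ℝ) - α) * Jx' x
      = F a * (x - a) ^ (-α) + ∫ τ in a..x, (x - τ) ^ (-α) * G τ := by
    rw [s1, s2, ← s3, hpow]
    ring
  rw [hD] at key1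
  exact key1


theorem riemann_liouville_eq_letnikov_caputo
    (a x α : ℝ) (hax : a < x) (hα0 : 0 < α) (hα1 : α < 1)
    (f : ℝ → ℝ) (hf : ContDiffOn ℝ 1 f (Set.Icc a x)) :
    HasDerivWithinAt
      (fun y => (1 / Real.Gamma (1 - α)) * ∫ τ in a..y, (y - τ) ^ (-α) * f τ)
      (f a * (x - a) ^ (-α) / Real.Gamma (1 - α) +
        (1 / Real.Gamma (1 - α)) *
          ∫ τ in a..x, (x - τ) ^ (-α) * derivWithin f (Set.Icc a x) τ)
      (Set.Icc a x) x := by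
  obtain ⟨F, G, hGcont, hFd, hFf, hGg⟩ := ext_aux a x hax f hf
  have key := keyB a x α hax hα0 hα1 F G hFd hGcont
  have h1 : HasDerivWithinAt (fun y => ∫ τ in a..y, (y - τ) ^ (-α) * f τ)
      (F a * (x - a) ^ (-α) + ∫ τ in a..x, (x - τ) ^ (-α) * G τ) (Set.Icc a x) x := by
    apply key.hasDerivWithinAt.congr
    · intro y hy
      apply intervalIntegral.integral_congr
      intro τ hτ
      rw [Set.uIcc_of_le hy.1] at hτ
      have hmem : τ ∈ Set.Icc a x := ⟨hτ.1, le_trans hτ.2 hy.2⟩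
      simp only [hFf hmem]
    · apply intervalIntegral.integral_congr
      intro τ hτ
      rw [Set.uIcc_of_le hax.le] at hτ
      simp only [hFf hτ]
  have h2 := h1.const_mul (1 / Real.Gamma (1 - α))
  have h3 : ∫ τ in a..x, (x - τ) ^ (-α) * G τ
      = ∫ τ in a..x, (x - τ) ^ (-α) * derivWithin f (Set.Icc a x) τ := by
    apply intervalIntegral.integral_congr
    intro τ hτ
    rw [Set.uIcc_of_le hax.le] at hτ
    simp only [hGg hτ]
  have h4 : F a = f a := hFf ⟨le_rfl, hax.le⟩
  rw [h3, h4] at h2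
  refine h2.congr_deriv ?_
  ring
end
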